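/- On the locally thin 2-category Cat_sep 𝒯 of L-separated 𝒯-categories and 𝒯-functors, the presheaf construction X ↦ X̂ together with the Yoneda functors y_X as unit and μ_X = y_X^{-1} as multiplication defines a 2-monad 𝕀 = ((·)̂, y, μ) which is of Kock–Zöberlein type (i.e. ŷ_X ≤ y_{X̂} for all X); moreover its Eilenberg–Moore category is equivalent to Cocompl_sep 𝒯, the category of L-separated cocomplete 𝒯-categories and left adjoint 𝒯-functors. In particular, Cocompl_sep 𝒯 is complete. -/

import Mathlib

/-!
Everything about `X̂` is read off the formula `X̂(𝔭, ψ) = ⋀_𝔷 hom(T_ξ ev(𝔷, 𝔭), ψ(m 𝔷))`, with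
`ev(𝔵, ψ) = ψ(𝔵)`, using the lax functoriality of `T_ξ` that (BC) provides:
`T_ξ(s · r) = T_ξ s · T_ξ r` and `T_ξ T_ξ r ≤ T_ξ r · (m × m)`.

The Yoneda lemma `X̂(T y 𝔵, ψ) = ψ(𝔵)` gives the unit laws of `μ = y⁻¹`, the adjunction
`f̂ ⊣ f⁻¹` gives 2-functoriality, and `ŷ ≤ y_{X̂}` amounts to `ψ · y^* ≤ X̂(-, ψ)`.
A left inverse `Sup ⊣ y` of `y` is the `ev`-weighted colimit of the identity; conversely the
`ψ`-weighted colimit of `h` is `z ↦ Sup(ψ(-, z) · h^*)`. A left adjoint `f` satisfies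
`f · Sup = Sup · f̂` by L-separatedness, and if `f` commutes with `Sup` then
`Sup · f⁻¹ · y` is right adjoint to it.

Completeness: left adjoints preserve weighted colimits, which are unique in an L-separated
`𝒯`-category. Hence the product, with the pointwise structure, has left adjoint projections,
and the subset where two left adjoints agree is closed under colimits, giving equalizers.
-/

universe u

namespace Paper

/-- A strict topological theory `𝒯 = (𝕋, V, ξ)`: a commutative unital quantale `V`
(a complete lattice with a commutative monoid structure whose multiplication preserves
suprema in each variable, with `⊥ < k`), a `Set`-monad `𝕋 = (T, e, m)` such that `T`
sends pullbacks to weak pullbacks and the naturality squares of `m` are weak pullbacks,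
and a `𝕋`-algebra structure `ξ : T V → V` for which `⊗` and `k` are `𝕋`-algebra
homomorphisms and `ξ_X := ξ ∘ T(-)` is a (monotone) natural transformation
`P_V → P_V T`. -/
structure TopTheory (V : Type u) [CompleteLattice V] (T : Type u → Type u) where
  tens : V → V → V
  unit : V
  tens_comm : ∀ u v : V, tens u v = tens v u
  tens_assoc : ∀ u v w : V, tens (tens u v) w = tens u (tens v w)
  unit_tens : ∀ v : V, tens unit v = v
  tens_sSup : ∀ (u : V) (S : Set V), tens u (sSup S) = ⨆ v ∈ S, tens u v
  bot_lt_unit : (⊥ : V) < unit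
  map : ∀ {X Y : Type u}, (X → Y) → T X → T Y
  map_id : ∀ {X : Type u}, map (id : X → X) = id
  map_comp : ∀ {X Y Z : Type u} (g : Y → Z) (f : X → Y) (𝔵 : T X),
    map (g ∘ f) 𝔵 = map g (map f 𝔵)
  e : ∀ {X : Type u}, X → T X
  m : ∀ {X : Type u}, T (T X) → T X
  e_nat : ∀ {X Y : Type u} (f : X → Y) (x : X), map f (e x) = e (f x)
  m_nat : ∀ {X Y : Type u} (f : X → Y) (𝔛 : T (T X)), map f (m 𝔛) = m (map (map f) 𝔛)
  m_e : ∀ {X : Type u} (𝔵 : T X), m (e 𝔵) = 𝔵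
  m_map_e : ∀ {X : Type u} (𝔵 : T X), m (map e 𝔵) = 𝔵
  m_assoc : ∀ {X : Type u} (𝔜 : T (T (T X))), m (m 𝔜) = m (map m 𝔜)
  /-- (BC): `T` sends pullbacks to weak pullbacks. -/
  map_bc : ∀ {X Y Z : Type u} (f : X → Z) (g : Y → Z) (𝔵 : T X) (𝔶 : T Y),
    map f 𝔵 = map g 𝔶 →
    ∃ 𝔴 : T {p : X × Y // f p.1 = g p.2},
      map (fun p => p.1.1) 𝔴 = 𝔵 ∧ map (fun p => p.1.2) 𝔴 = 𝔶
  /-- (BC): every naturality square of `m` is a weak pullback. -/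
  m_bc : ∀ {X Y : Type u} (f : X → Y) (𝔜 : T (T Y)) (𝔵 : T X),
    m 𝔜 = map f 𝔵 → ∃ 𝔛 : T (T X), map (map f) 𝔛 = 𝔜 ∧ m 𝔛 = 𝔵
  xi : T V → V
  xi_e : ∀ v : V, xi (e v) = v
  xi_m : ∀ 𝔙 : T (T V), xi (m 𝔙) = xi (map xi 𝔙)
  /-- `k : 1 → V` is a `𝕋`-algebra homomorphism. -/
  xi_unit : ∀ {X : Type u} (𝔵 : T X), xi (map (fun _ => unit) 𝔵) = unit
  /-- `⊗ : V × V → V` is a `𝕋`-algebra homomorphism. -/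
  xi_tens : ∀ 𝔴 : T (V × V),
    xi (map (fun p => tens p.1 p.2) 𝔴) = tens (xi (map Prod.fst 𝔴)) (xi (map Prod.snd 𝔴))
  /-- each component `ξ_X : V^X → V^{T X}` is monotone. -/
  xi_mono : ∀ {X : Type u} (φ φ' : X → V), (∀ x, φ x ≤ φ' x) →
    ∀ 𝔵 : T X, xi (map φ 𝔵) ≤ xi (map φ' 𝔵)
  /-- `ξ_X` is a natural transformation `P_V → P_V T`. -/
  xi_nat : ∀ {X Y : Type u} (f : X → Y) (φ : X → V) (𝔶 : T Y),
    (⨆ 𝔵 : {𝔵 : T X // map f 𝔵 = 𝔶}, xi (map φ 𝔵.1)) =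
      xi (map (fun y => ⨆ x : {x : X // f x = y}, φ x.1) 𝔶)

namespace TopTheory

variable {V : Type u} [CompleteLattice V] {T : Type u → Type u}

/-- The internal hom of the quantale: `u ⊗ (-) ⊣ hom (u, -)`. -/
def ihom (𝒯 : TopTheory V T) (u w : V) : V := sSup {z | 𝒯.tens u z ≤ w}

/-- The extension `T_ξ` of `T : Set → Set` to `V`-relations. -/
def Txi (𝒯 : TopTheory V T) {X Y : Type u} (r : X → Y → V) (𝔵 : T X) (𝔶 : T Y) : V :=
  ⨆ 𝔴 : {w : T (X × Y) // 𝒯.map Prod.fst w = 𝔵 ∧ 𝒯.map Prod.snd w = 𝔶},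
    𝒯.xi (𝒯.map (fun p => r p.1 p.2) 𝔴.1)

/-- Kleisli convolution `β ∘ α = β · T_ξ α · m_X°` of `𝒯`-relations
`α : X ⇸ Y` and `β : Y ⇸ Z`. -/
def kleisli (𝒯 : TopTheory V T) {X Y Z : Type u}
    (β : T Y → Z → V) (α : T X → Y → V) (𝔵 : T X) (z : Z) : V :=
  ⨆ 𝔛 : {𝔛 : T (T X) // 𝒯.m 𝔛 = 𝔵}, ⨆ 𝔶 : T Y, 𝒯.tens (𝒯.Txi α 𝔛.1 𝔶) (β 𝔶 z)

/-- The `𝒯`-relation `e_X° : X ⇸ X`. -/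
def unitRel (𝒯 : TopTheory V T) (X : Type u) (𝔵 : T X) (x : X) : V :=
  ⨆ _ : 𝔵 = 𝒯.e x, 𝒯.unit

/-- A `𝒯`-category structure on `X`: a `𝒯`-relation `a : X ⇸ X` with
`e_X° ≤ a` and `a ∘ a ≤ a`. -/
structure TCatStr (𝒯 : TopTheory V T) (X : Type u) where
  rel : T X → X → V
  le_refl : ∀ x : X, 𝒯.unit ≤ rel (𝒯.e x) x
  comp : ∀ (𝔵 : T X) (x : X), 𝒯.kleisli rel rel 𝔵 x ≤ rel 𝔵 x

/-- The `𝒯`-module conditions `φ ∘ a ≤ φ` and `b ∘ φ ≤ φ` for a `𝒯`-relation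
`φ : X ⇸ Y` between (structures underlying) `𝒯`-categories `(X,a)` and `(Y,b)`. -/
def IsTModRel (𝒯 : TopTheory V T) {X Y : Type u}
    (a : T X → X → V) (b : T Y → Y → V) (φ : T X → Y → V) : Prop :=
  (∀ 𝔵 y, 𝒯.kleisli φ a 𝔵 y ≤ φ 𝔵 y) ∧ (∀ 𝔵 y, 𝒯.kleisli b φ 𝔵 y ≤ φ 𝔵 y)

variable {𝒯 : TopTheory V T}

/-- `f_* = b · T f`. -/
def modStar {X Y : Type u} (b : 𝒯.TCatStr Y) (f : X → Y) (𝔵 : T X) (y : Y) : V :=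
  b.rel (𝒯.map f 𝔵) y

/-- `f^* = f° · b`. -/
def modCostar {X Y : Type u} (b : 𝒯.TCatStr Y) (f : X → Y) (𝔶 : T Y) (x : X) : V :=
  b.rel 𝔶 (f x)

/-- The extension `φ ⟜ ψ` of `φ : X ⇸∘ Y` along `ψ : X ⇸∘ Z`, given by
`(φ ⟜ ψ)(𝔷,y) = ⋀_{𝔵 ∈ T X} hom((T_ξ ψ · m_X°)(𝔵,𝔷), φ(𝔵,y))`. -/
def extend (𝒯 : TopTheory V T) {X Y Z : Type u}
    (φ : T X → Y → V) (ψ : T X → Z → V) (𝔷 : T Z) (y : Y) : V :=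
  ⨅ 𝔵 : T X, 𝒯.ihom (⨆ 𝔛 : {𝔛 : T (T X) // 𝒯.m 𝔛 = 𝔵}, 𝒯.Txi ψ 𝔛.1 𝔷) (φ 𝔵 y)

/-- A `𝒯`-functor `f : (X,a) → (Y,b)`. -/
def IsTFunctor {X Y : Type u} (a : 𝒯.TCatStr X) (b : 𝒯.TCatStr Y) (f : X → Y) : Prop :=
  ∀ (𝔵 : T X) (x : X), a.rel 𝔵 x ≤ b.rel (𝒯.map f 𝔵) (f x)

/-- A fully faithful `𝒯`-functor. -/
def FullyFaithful {X Y : Type u} (a : 𝒯.TCatStr X) (b : 𝒯.TCatStr Y) (f : X → Y) : Prop :=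
  ∀ (𝔵 : T X) (x : X), a.rel 𝔵 x = b.rel (𝒯.map f 𝔵) (f x)

/-- The order `f ≤ g ⟺ f^* ≤ g^*` on `𝒯`-functors `X → (Y,b)`. -/
def funLE {X Y : Type u} (b : 𝒯.TCatStr Y) (f g : X → Y) : Prop :=
  ∀ (𝔶 : T Y) (x : X), b.rel 𝔶 (f x) ≤ b.rel 𝔶 (g x)

/-- Equivalence `f ≅ g ⟺ f^* = g^*` of `𝒯`-functors `X → (Y,b)`. -/
def FunEquiv {X Y : Type u} (b : 𝒯.TCatStr Y) (f g : X → Y) : Prop :=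
  ∀ (𝔶 : T Y) (x : X), b.rel 𝔶 (f x) = b.rel 𝔶 (g x)

/-- `f ⊣ g`:  `1_X ≤ g·f` and `f·g ≤ 1_Y`. -/
def IsAdjunction {X Y : Type u} (a : 𝒯.TCatStr X) (b : 𝒯.TCatStr Y)
    (f : X → Y) (g : Y → X) : Prop :=
  (∀ (𝔵 : T X) (x : X), a.rel 𝔵 x ≤ a.rel 𝔵 (g (f x))) ∧
    (∀ (𝔶 : T Y) (y : Y), b.rel 𝔶 (f (g y)) ≤ b.rel 𝔶 y)

/-- A left adjoint `𝒯`-functor. -/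
def IsLeftAdjoint {X Y : Type u} (a : 𝒯.TCatStr X) (b : 𝒯.TCatStr Y) (f : X → Y) : Prop :=
  IsTFunctor a b f ∧ ∃ g : Y → X, IsTFunctor b a g ∧ IsAdjunction a b f g

/-- L-separatedness: equivalent `𝒯`-functors into `X` are equal. -/
def Separated {X : Type u} (a : 𝒯.TCatStr X) : Prop :=
  ∀ (A : Type u) (as : 𝒯.TCatStr A) (f g : A → X),
    IsTFunctor as a f → IsTFunctor as a g → FunEquiv a f g → f = g

/-- Injectivity with respect to fully faithful `𝒯`-functors. -/
def Injective {X : Type u} (a : 𝒯.TCatStr X) : Prop :=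
  ∀ (A B : Type u) (as : 𝒯.TCatStr A) (bs : 𝒯.TCatStr B) (f : A → X) (i : A → B),
    IsTFunctor as a f → IsTFunctor as bs i → FullyFaithful as bs i →
      ∃ g : B → X, IsTFunctor bs a g ∧ FunEquiv a (g ∘ i) f

/-- `g : Z → X` is the `ψ`-weighted colimit of `h : A → X`, i.e. `g_* = h_* ⟜ ψ`. -/
def IsColimit {X A Z : Type u} (a : 𝒯.TCatStr X) (h : A → X) (ψ : T A → Z → V)
    (g : Z → X) : Prop :=
  ∀ (𝔷 : T Z) (x : X), modStar a g 𝔷 x = 𝒯.extend (modStar a h) ψ 𝔷 x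

/-- Cocompleteness: every weighted diagram has a colimit. -/
def Cocomplete {X : Type u} (a : 𝒯.TCatStr X) : Prop :=
  ∀ (A Z : Type u) (as : 𝒯.TCatStr A) (cs : 𝒯.TCatStr Z) (h : A → X),
    IsTFunctor as a h → ∀ ψ : T A → Z → V, 𝒯.IsTModRel as.rel cs.rel ψ →
      ∃ g : Z → X, IsTFunctor cs a g ∧ IsColimit a h ψ g

/-- Cocontinuity: preservation of all weighted colimits. -/
def Cocontinuous {X Y : Type u} (a : 𝒯.TCatStr X) (b : 𝒯.TCatStr Y) (f : X → Y) : Prop :=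
  ∀ (A Z : Type u) (as : 𝒯.TCatStr A) (cs : 𝒯.TCatStr Z) (h : A → X)
    (ψ : T A → Z → V) (g : Z → X),
    IsTFunctor as a h → 𝒯.IsTModRel as.rel cs.rel ψ → IsTFunctor cs a g →
      IsColimit a h ψ g → IsColimit b (f ∘ h) ψ (f ∘ g)

/-- A presheaf on `(X,a)`: a `𝒯`-module `X ⇸∘ G`, where `G = (1, e_1°)`. -/
def IsPresheaf {X : Type u} (a : 𝒯.TCatStr X) (ψ : T X → V) : Prop :=
  𝒯.IsTModRel a.rel (𝒯.unitRel PUnit) (fun 𝔵 _ => ψ 𝔵)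

/-- The underlying set of the presheaf `𝒯`-category `X̂`. -/
def Hat {X : Type u} (a : 𝒯.TCatStr X) : Type u := {ψ : T X → V // IsPresheaf a ψ}

/-- The `𝒯`-category structure `⟦-,-⟧` of `V^{|X|}`. -/
def powRel (𝒯 : TopTheory V T) (X : Type u) (𝔭 : T (T X → V)) (ψ : T X → V) : V :=
  ⨅ 𝔮 : {q : T ((T X) × (T X → V)) // 𝒯.map Prod.snd q = 𝔭},
    𝒯.ihom (𝒯.xi (𝒯.map (fun p => p.2 p.1) 𝔮.1)) (ψ (𝒯.m (𝒯.map Prod.fst 𝔮.1)))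

/-- `hs` is the `𝒯`-category structure on `X̂` inherited from `V^{|X|}`. -/
def IsHatStr {X : Type u} (a : 𝒯.TCatStr X) (hs : 𝒯.TCatStr (Hat a)) : Prop :=
  ∀ (𝔭 : T (Hat a)) (ψ : Hat a), hs.rel 𝔭 ψ = 𝒯.powRel X (𝒯.map Subtype.val 𝔭) ψ.1

/-- `y` is the Yoneda functor `X → X̂`, `y x = a(-,x)`. -/
def IsYoneda {X : Type u} (a : 𝒯.TCatStr X) (y : X → Hat a) : Prop :=
  ∀ (x : X) (𝔵 : T X), (y x).1 𝔵 = a.rel 𝔵 x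

/-- The underlying map `ψ ↦ ψ ∘ f^*` of `f̂ : X̂ → Ŷ`. -/
def hatMapRel {X Y : Type u} (b : 𝒯.TCatStr Y) (f : X → Y) (ψ : T X → V) (𝔶 : T Y) : V :=
  𝒯.kleisli (fun 𝔵 (_ : PUnit.{u + 1}) => ψ 𝔵) (modCostar b f) 𝔶 PUnit.unit

/-- `fh` is the `𝒯`-functor `f̂ : X̂ → Ŷ`, with underlying map `ψ ↦ ψ ∘ f^*`. -/
def IsHatMap {X Y : Type u} (a : 𝒯.TCatStr X) (b : 𝒯.TCatStr Y) (f : X → Y)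
    (fh : Hat a → Hat b) : Prop :=
  ∀ (ψ : Hat a) (𝔶 : T Y), (fh ψ).1 𝔶 = hatMapRel b f ψ.1 𝔶

/-- An inhabited `𝒯`-module: `k ≤ ⋀_y ⋁_𝔵 φ(𝔵,y)`. -/
def InhabitedMod (𝒯 : TopTheory V T) {X Y : Type u} (φ : T X → Y → V) : Prop :=
  𝒯.unit ≤ ⨅ y : Y, ⨆ 𝔵 : T X, φ 𝔵 y

/-- A dense `𝒯`-functor: `f_*` is inhabited. -/
def Dense {X Y : Type u} (b : 𝒯.TCatStr Y) (f : X → Y) : Prop :=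
  𝒯.InhabitedMod (modStar b f)

/-- The underlying set of `X⁺ = {ψ ∈ X̂ ∣ ψ inhabited}`. -/
def Plus {X : Type u} (a : 𝒯.TCatStr X) : Type u :=
  {ψ : Hat a // 𝒯.InhabitedMod (fun 𝔵 (_ : PUnit.{u + 1}) => ψ.1 𝔵)}

/-- `ps` is the `𝒯`-category structure on `X⁺` inherited from `X̂`. -/
def IsPlusStr {X : Type u} (a : 𝒯.TCatStr X) (hs : 𝒯.TCatStr (Hat a))
    (ps : 𝒯.TCatStr (Plus a)) : Prop :=
  ∀ (𝔭 : T (Plus a)) (ψ : Plus a), ps.rel 𝔭 ψ = hs.rel (𝒯.map Subtype.val 𝔭) ψ.1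

/-- Inhabited-cocompleteness: all colimits with inhabited weights exist. -/
def ICocomplete {X : Type u} (a : 𝒯.TCatStr X) : Prop :=
  ∀ (A Z : Type u) (as : 𝒯.TCatStr A) (cs : 𝒯.TCatStr Z) (h : A → X),
    IsTFunctor as a h → ∀ ψ : T A → Z → V, 𝒯.IsTModRel as.rel cs.rel ψ →
      𝒯.InhabitedMod ψ → ∃ g : Z → X, IsTFunctor cs a g ∧ IsColimit a h ψ g

/-- Inhabited-cocontinuity: preservation of all colimits with inhabited weights. -/
def ICocontinuous {X Y : Type u} (a : 𝒯.TCatStr X) (b : 𝒯.TCatStr Y) (f : X → Y) : Prop :=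
  ∀ (A Z : Type u) (as : 𝒯.TCatStr A) (cs : 𝒯.TCatStr Z) (h : A → X)
    (ψ : T A → Z → V) (g : Z → X),
    IsTFunctor as a h → 𝒯.IsTModRel as.rel cs.rel ψ → 𝒯.InhabitedMod ψ →
      IsTFunctor cs a g → IsColimit a h ψ g → IsColimit b (f ∘ h) ψ (f ∘ g)


/-! Auxiliary lemmas and the categories `Cocompl_sep 𝒯` and `Cat_sep V`. -/

section Lemmas

variable (𝒯 : TopTheory V T)

lemma tens_mono {u u' v v' : V} (h1 : u ≤ u') (h2 : v ≤ v') :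
    𝒯.tens u v ≤ 𝒯.tens u' v' := by
  have mono2 : ∀ (w : V) {x y : V}, x ≤ y → 𝒯.tens w x ≤ 𝒯.tens w y := by
    intro w x y hxy
    have hxy' : sSup ({x, y} : Set V) = y := by
      rw [sSup_pair, sup_eq_right.mpr hxy]
    have := 𝒯.tens_sSup w ({x, y} : Set V)
    rw [hxy'] at this
    rw [this]
    exact le_biSup _ (by simp)
  calc 𝒯.tens u v ≤ 𝒯.tens u v' := mono2 _ h2
    _ = 𝒯.tens v' u := 𝒯.tens_comm _ _
    _ ≤ 𝒯.tens v' u' := mono2 _ h1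
    _ = 𝒯.tens u' v' := 𝒯.tens_comm _ _

lemma le_Txi_e {A B : Type u} (rr : A → B → V) (x : A) (y : B) :
    rr x y ≤ 𝒯.Txi rr (𝒯.e x) (𝒯.e y) := by
  have h1 : 𝒯.map (Prod.fst : A × B → A) (𝒯.e (x, y)) = 𝒯.e x := 𝒯.e_nat _ _
  have h2 : 𝒯.map (Prod.snd : A × B → B) (𝒯.e (x, y)) = 𝒯.e y := 𝒯.e_nat _ _
  have h3 : 𝒯.xi (𝒯.map (fun p : A × B => rr p.1 p.2) (𝒯.e (x, y))) = rr x y := by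
    rw [𝒯.e_nat, 𝒯.xi_e]
  calc rr x y = _ := h3.symm
    _ ≤ 𝒯.Txi rr (𝒯.e x) (𝒯.e y) :=
      le_iSup_of_le (⟨𝒯.e (x, y), h1, h2⟩ :
        {w : T (A × B) // 𝒯.map Prod.fst w = 𝒯.e x ∧ 𝒯.map Prod.snd w = 𝒯.e y}) le_rfl

variable {𝒯}

lemma whisker {X : Type u} (a : 𝒯.TCatStr X) {x x' : X}
    (h : 𝒯.unit ≤ a.rel (𝒯.e x) x') (𝔵 : T X) :
    a.rel 𝔵 x ≤ a.rel 𝔵 x' := by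
  have key : 𝒯.tens (𝒯.Txi a.rel (𝒯.e 𝔵) (𝒯.e x)) (a.rel (𝒯.e x) x')
      ≤ 𝒯.kleisli a.rel a.rel 𝔵 x' := by
    refine le_iSup_of_le (⟨𝒯.e 𝔵, 𝒯.m_e 𝔵⟩ : {𝔛 : T (T X) // 𝒯.m 𝔛 = 𝔵}) ?_
    exact le_iSup_of_le (𝒯.e x) le_rfl
  calc a.rel 𝔵 x = 𝒯.tens 𝒯.unit (a.rel 𝔵 x) := (𝒯.unit_tens _).symm
    _ = 𝒯.tens (a.rel 𝔵 x) 𝒯.unit := 𝒯.tens_comm _ _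
    _ ≤ 𝒯.tens (𝒯.Txi a.rel (𝒯.e 𝔵) (𝒯.e x)) (a.rel (𝒯.e x) x') :=
        𝒯.tens_mono (𝒯.le_Txi_e a.rel 𝔵 x) h
    _ ≤ 𝒯.kleisli a.rel a.rel 𝔵 x' := key
    _ ≤ a.rel 𝔵 x' := a.comp 𝔵 x'

lemma isTFunctor_id {X : Type u} (a : 𝒯.TCatStr X) : IsTFunctor a a id := by
  intro 𝔵 x
  rw [show 𝒯.map (id : X → X) 𝔵 = 𝔵 from congrFun 𝒯.map_id 𝔵]
  exact le_rfl

lemma IsTFunctor.comp {X Y Z : Type u} {a : 𝒯.TCatStr X} {b : 𝒯.TCatStr Y}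
    {c : 𝒯.TCatStr Z} {f : X → Y} {f' : Y → Z}
    (hf : IsTFunctor a b f) (hf' : IsTFunctor b c f') : IsTFunctor a c (f' ∘ f) := by
  intro 𝔵 x
  calc a.rel 𝔵 x ≤ b.rel (𝒯.map f 𝔵) (f x) := hf 𝔵 x
    _ ≤ c.rel (𝒯.map f' (𝒯.map f 𝔵)) (f' (f x)) := hf' _ _
    _ = c.rel (𝒯.map (f' ∘ f) 𝔵) ((f' ∘ f) x) := by rw [𝒯.map_comp]; rfl

lemma isLeftAdjoint_id {X : Type u} (a : 𝒯.TCatStr X) : IsLeftAdjoint a a id :=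
  ⟨isTFunctor_id a, id, isTFunctor_id a, fun _ _ => le_rfl, fun _ _ => le_rfl⟩

lemma IsLeftAdjoint.comp {X Y Z : Type u} {a : 𝒯.TCatStr X} {b : 𝒯.TCatStr Y}
    {c : 𝒯.TCatStr Z} {f : X → Y} {f' : Y → Z}
    (h1 : IsLeftAdjoint a b f) (h2 : IsLeftAdjoint b c f') :
    IsLeftAdjoint a c (f' ∘ f) := by
  obtain ⟨hf, g, hg, unit1, counit1⟩ := h1
  obtain ⟨hf', g', hg', unit2, counit2⟩ := h2
  refine ⟨hf.comp hf', g ∘ g', hg'.comp hg, ?_, ?_⟩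
  · intro 𝔵 x
    have step1 : a.rel 𝔵 x ≤ a.rel 𝔵 (g (f x)) := unit1 𝔵 x
    have hk : 𝒯.unit ≤ a.rel (𝒯.e (g (f x))) (g (g' (f' (f x)))) := by
      have hb1 : 𝒯.unit ≤ b.rel (𝒯.e (f x)) (g' (f' (f x))) :=
        le_trans (b.le_refl (f x)) (unit2 _ _)
      have hb2 : b.rel (𝒯.e (f x)) (g' (f' (f x)))
          ≤ a.rel (𝒯.e (g (f x))) (g (g' (f' (f x)))) := by
        have := hg (𝒯.e (f x)) (g' (f' (f x)))
        rwa [𝒯.e_nat] at this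
      exact le_trans hb1 hb2
    exact le_trans step1 (whisker a hk 𝔵)
  · intro 𝔷 z
    show c.rel 𝔷 (f' (f (g (g' z)))) ≤ c.rel 𝔷 z
    have hk : 𝒯.unit ≤ c.rel (𝒯.e (f' (f (g (g' z))))) (f' (g' z)) := by
      have hb1 : 𝒯.unit ≤ b.rel (𝒯.e (f (g (g' z)))) (g' z) :=
        le_trans (b.le_refl _) (counit1 (𝒯.e (f (g (g' z)))) (g' z))
      have hb2 : b.rel (𝒯.e (f (g (g' z)))) (g' z)
          ≤ c.rel (𝒯.e (f' (f (g (g' z))))) (f' (g' z)) := by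
        have := hf' (𝒯.e (f (g (g' z)))) (g' z)
        rwa [𝒯.e_nat] at this
      exact le_trans hb1 hb2
    exact le_trans (whisker c hk 𝔷) (counit2 𝔷 z)

lemma Txi_comp_le (𝒯 : TopTheory V T) {A B A' B' : Type u}
    (rr : A' → B' → V) (uu : A → A') (vv : B → B') (𝔞 : T A) (𝔟 : T B) :
    𝒯.Txi (fun p q => rr (uu p) (vv q)) 𝔞 𝔟 ≤ 𝒯.Txi rr (𝒯.map uu 𝔞) (𝒯.map vv 𝔟) := by
  apply iSup_le
  rintro ⟨𝔴, hw1, hw2⟩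
  have hfst : 𝒯.map Prod.fst (𝒯.map (fun p : A × B => (uu p.1, vv p.2)) 𝔴)
      = 𝒯.map uu 𝔞 := by
    calc 𝒯.map Prod.fst (𝒯.map (fun p : A × B => (uu p.1, vv p.2)) 𝔴)
        = 𝒯.map (fun p : A × B => uu p.1) 𝔴 := (𝒯.map_comp _ _ 𝔴).symm
      _ = 𝒯.map uu (𝒯.map Prod.fst 𝔴) := 𝒯.map_comp _ _ 𝔴
      _ = 𝒯.map uu 𝔞 := by rw [hw1]
  have hsnd : 𝒯.map Prod.snd (𝒯.map (fun p : A × B => (uu p.1, vv p.2)) 𝔴)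
      = 𝒯.map vv 𝔟 := by
    calc 𝒯.map Prod.snd (𝒯.map (fun p : A × B => (uu p.1, vv p.2)) 𝔴)
        = 𝒯.map (fun p : A × B => vv p.2) 𝔴 := (𝒯.map_comp _ _ 𝔴).symm
      _ = 𝒯.map vv (𝒯.map Prod.snd 𝔴) := 𝒯.map_comp _ _ 𝔴
      _ = 𝒯.map vv 𝔟 := by rw [hw2]
  refine le_iSup_of_le
    (⟨𝒯.map (fun p : A × B => (uu p.1, vv p.2)) 𝔴, hfst, hsnd⟩ :
      {w : T (A' × B') // 𝒯.map Prod.fst w = 𝒯.map uu 𝔞 ∧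
        𝒯.map Prod.snd w = 𝒯.map vv 𝔟}) (le_of_eq ?_)
  show 𝒯.xi (𝒯.map (fun p : A × B => rr (uu p.1) (vv p.2)) 𝔴)
      = 𝒯.xi (𝒯.map (fun q : A' × B' => rr q.1 q.2)
          (𝒯.map (fun p : A × B => (uu p.1, vv p.2)) 𝔴))
  rw [← 𝒯.map_comp]
  rfl

/-- The `𝒯`-category structure obtained by restricting `b` along `f`. -/
def pullbackStr {X Y : Type u} (b : 𝒯.TCatStr Y) (f : X → Y) : 𝒯.TCatStr X where
  rel 𝔵 x := b.rel (𝒯.map f 𝔵) (f x)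
  le_refl x := by
    show 𝒯.unit ≤ b.rel (𝒯.map f (𝒯.e x)) (f x)
    rw [𝒯.e_nat]; exact b.le_refl (f x)
  comp 𝔵 x := by
    apply iSup_le
    rintro ⟨𝔛, h𝔛⟩
    apply iSup_le
    intro 𝔶
    have key := Txi_comp_le 𝒯 b.rel (𝒯.map f) f 𝔛 𝔶
    have hm : 𝒯.m (𝒯.map (𝒯.map f) 𝔛) = 𝒯.map f 𝔵 := by
      rw [← 𝒯.m_nat, h𝔛]
    have step : 𝒯.tens (𝒯.Txi (fun 𝔵' x' => b.rel (𝒯.map f 𝔵') (f x')) 𝔛 𝔶)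
        (b.rel (𝒯.map f 𝔶) (f x)) ≤ 𝒯.kleisli b.rel b.rel (𝒯.map f 𝔵) (f x) := by
      refine le_trans (𝒯.tens_mono key le_rfl) ?_
      exact le_iSup_of_le (⟨𝒯.map (𝒯.map f) 𝔛, hm⟩ :
        {𝔜 : T (T Y) // 𝒯.m 𝔜 = 𝒯.map f 𝔵}) (le_iSup_of_le (𝒯.map f 𝔶) le_rfl)
    exact le_trans step (b.comp _ _)

lemma star_transport {A X : Type u} {a : 𝒯.TCatStr X} {f g : A → X}
    (hgf : ∀ v, 𝒯.unit ≤ a.rel (𝒯.e (g v)) (f v)) (𝔵 : T A) (y : X) :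
    a.rel (𝒯.map f 𝔵) y ≤ a.rel (𝒯.map g 𝔵) y := by
  have hp1 : 𝒯.map Prod.fst (𝒯.map (fun v : A => (𝒯.e (g v), f v)) 𝔵)
      = 𝒯.map 𝒯.e (𝒯.map g 𝔵) := by
    calc 𝒯.map Prod.fst (𝒯.map (fun v : A => (𝒯.e (g v), f v)) 𝔵)
        = 𝒯.map (fun v : A => 𝒯.e (g v)) 𝔵 := (𝒯.map_comp _ _ 𝔵).symm
      _ = 𝒯.map 𝒯.e (𝒯.map g 𝔵) := 𝒯.map_comp _ _ 𝔵
  have hp2 : 𝒯.map Prod.snd (𝒯.map (fun v : A => (𝒯.e (g v), f v)) 𝔵)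
      = 𝒯.map f 𝔵 := (𝒯.map_comp _ _ 𝔵).symm
  have hm : 𝒯.m (𝒯.map Prod.fst (𝒯.map (fun v : A => (𝒯.e (g v), f v)) 𝔵))
      = 𝒯.map g 𝔵 := by rw [hp1, 𝒯.m_map_e]
  have hval : 𝒯.unit ≤ 𝒯.xi (𝒯.map (fun p : T X × X => a.rel p.1 p.2)
      (𝒯.map (fun v : A => (𝒯.e (g v), f v)) 𝔵)) := by
    have h1 : 𝒯.map (fun p : T X × X => a.rel p.1 p.2)
        (𝒯.map (fun v : A => (𝒯.e (g v), f v)) 𝔵)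
        = 𝒯.map (fun v : A => a.rel (𝒯.e (g v)) (f v)) 𝔵 := by
      rw [← 𝒯.map_comp]; rfl
    have h2 : 𝒯.xi (𝒯.map (fun _ : A => 𝒯.unit) 𝔵)
        ≤ 𝒯.xi (𝒯.map (fun v : A => a.rel (𝒯.e (g v)) (f v)) 𝔵) :=
      𝒯.xi_mono _ _ hgf 𝔵
    rw [h1, ← 𝒯.xi_unit 𝔵]
    exact h2
  have hTxi : 𝒯.unit ≤ 𝒯.Txi a.rel
      (𝒯.map Prod.fst (𝒯.map (fun v : A => (𝒯.e (g v), f v)) 𝔵)) (𝒯.map f 𝔵) :=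
    le_trans hval (le_iSup_of_le
      (⟨𝒯.map (fun v : A => (𝒯.e (g v), f v)) 𝔵, rfl, hp2⟩ :
        {w : T (T X × X) //
          𝒯.map Prod.fst w = 𝒯.map Prod.fst (𝒯.map (fun v : A => (𝒯.e (g v), f v)) 𝔵) ∧
          𝒯.map Prod.snd w = 𝒯.map f 𝔵}) le_rfl)
  calc a.rel (𝒯.map f 𝔵) y
      = 𝒯.tens 𝒯.unit (a.rel (𝒯.map f 𝔵) y) := (𝒯.unit_tens _).symm
    _ ≤ 𝒯.tens (𝒯.Txi a.rel
        (𝒯.map Prod.fst (𝒯.map (fun v : A => (𝒯.e (g v), f v)) 𝔵)) (𝒯.map f 𝔵))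
        (a.rel (𝒯.map f 𝔵) y) := 𝒯.tens_mono hTxi le_rfl
    _ ≤ 𝒯.kleisli a.rel a.rel (𝒯.map g 𝔵) y :=
        le_iSup_of_le
          (⟨𝒯.map Prod.fst (𝒯.map (fun v : A => (𝒯.e (g v), f v)) 𝔵), hm⟩ :
            {𝔛 : T (T X) // 𝒯.m 𝔛 = 𝒯.map g 𝔵})
          (le_iSup_of_le (𝒯.map f 𝔵) le_rfl)
    _ ≤ a.rel (𝒯.map g 𝔵) y := a.comp _ _

end Lemmas

/-! ### `V`-categories -/

/-- A `V`-category structure. -/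
structure VCatStr (𝒯 : TopTheory V T) (X : Type u) where
  rel : X → X → V
  le_refl : ∀ x : X, 𝒯.unit ≤ rel x x
  comp : ∀ x y z : X, 𝒯.tens (rel x y) (rel y z) ≤ rel x z

variable {𝒯 : TopTheory V T}

/-- A `V`-functor. -/
def IsVFunctor {X Y : Type u} (rr : 𝒯.VCatStr X) (ss : 𝒯.VCatStr Y) (f : X → Y) : Prop :=
  ∀ x y : X, rr.rel x y ≤ ss.rel (f x) (f y)

/-- L-separatedness for `V`-categories: equivalent `V`-functors into `X` are equal. -/
def VSep {X : Type u} (rr : 𝒯.VCatStr X) : Prop :=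
  ∀ (A : Type u) (ra : 𝒯.VCatStr A) (f g : A → X), IsVFunctor ra rr f → IsVFunctor ra rr g →
    (∀ x, 𝒯.unit ≤ rr.rel (f x) (g x)) → (∀ x, 𝒯.unit ≤ rr.rel (g x) (f x)) → f = g

/-- The underlying `V`-category `(X, a·e_X)` of a `𝒯`-category `(X,a)`. -/
def underV {X : Type u} (a : 𝒯.TCatStr X) : 𝒯.VCatStr X where
  rel x y := a.rel (𝒯.e x) y
  le_refl := a.le_refl
  comp x y z := by
    have h1 : a.rel (𝒯.e x) y ≤ 𝒯.Txi a.rel (𝒯.e (𝒯.e x)) (𝒯.e y) :=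
      𝒯.le_Txi_e a.rel (𝒯.e x) y
    have h2 : 𝒯.tens (𝒯.Txi a.rel (𝒯.e (𝒯.e x)) (𝒯.e y)) (a.rel (𝒯.e y) z)
        ≤ 𝒯.kleisli a.rel a.rel (𝒯.e x) z := by
      refine le_iSup_of_le (⟨𝒯.e (𝒯.e x), 𝒯.m_e _⟩ :
        {𝔛 : T (T X) // 𝒯.m 𝔛 = 𝒯.e x}) ?_
      exact le_iSup_of_le (𝒯.e y) le_rfl
    exact le_trans (le_trans (𝒯.tens_mono h1 le_rfl) h2) (a.comp _ _)

lemma underV_sep {X : Type u} {a : 𝒯.TCatStr X} (ha : Separated a) : VSep (underV a) := by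
  intro A ra f g hf hg hfg hgf
  apply ha A (pullbackStr a f) f g
  · intro 𝔵 v
    exact le_rfl
  · intro 𝔵 v
    exact le_trans (star_transport hgf 𝔵 (f v)) (whisker a (hfg v) _)
  · intro 𝔶 v
    exact le_antisymm (whisker a (hfg v) 𝔶) (whisker a (hgf v) 𝔶)

/-! ### The categories `Cocompl_sep 𝒯`, `Cat_sep V` and the forgetful functors -/

/-- The category `Cocompl_sep 𝒯` of L-separated cocomplete `𝒯`-categories and left
adjoint `𝒯`-functors. -/
structure CocomplSep (𝒯 : TopTheory V T) : Type (u + 1) where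
  carrier : Type u
  str : 𝒯.TCatStr carrier
  sep : Separated str
  coc : Cocomplete str

instance : CategoryTheory.Category.{u} (CocomplSep 𝒯) where
  Hom A B := {f : A.carrier → B.carrier // IsLeftAdjoint A.str B.str f}
  id A := ⟨id, isLeftAdjoint_id A.str⟩
  comp f g := ⟨g.1 ∘ f.1, f.2.comp g.2⟩
  id_comp f := Subtype.ext rfl
  comp_id f := Subtype.ext rfl
  assoc f g h := Subtype.ext rfl

/-- The forgetful functor `Cocompl_sep 𝒯 → Set`. -/
def forgetToSet (𝒯 : TopTheory V T) : CategoryTheory.Functor (CocomplSep 𝒯) (Type u) where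
  obj A := A.carrier
  map f := TypeCat.ofHom f.1
  map_id A := rfl
  map_comp f g := rfl

/-- The category `Cat_sep V` of L-separated `V`-categories and `V`-functors. -/
structure CatSepV (𝒯 : TopTheory V T) : Type (u + 1) where
  carrier : Type u
  str : 𝒯.VCatStr carrier
  sep : VSep str

instance : CategoryTheory.Category.{u} (CatSepV 𝒯) where
  Hom A B := {f : A.carrier → B.carrier // IsVFunctor A.str B.str f}
  id A := ⟨id, fun _ _ => le_rfl⟩
  comp f g := ⟨g.1 ∘ f.1, fun x y => le_trans (f.2 x y) (g.2 _ _)⟩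
  id_comp f := Subtype.ext rfl
  comp_id f := Subtype.ext rfl
  assoc f g h := Subtype.ext rfl

/-- The forgetful functor `Cocompl_sep 𝒯 → Cat_sep V`, sending `(X,a)` to `(X, a·e_X)`. -/
def forgetToVCat (𝒯 : TopTheory V T) :
    CategoryTheory.Functor (CocomplSep 𝒯) (CatSepV 𝒯) where
  obj A := ⟨A.carrier, underV A.str, underV_sep A.sep⟩
  map {A B} f := ⟨f.1, fun x y => by
    have := f.2.1 (𝒯.e x) y
    rwa [𝒯.e_nat] at this⟩
  map_id A := Subtype.ext rfl
  map_comp f g := Subtype.ext rfl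

section Quantale

variable (𝒯 : TopTheory V T)

lemma map_map {X Y Z : Type u} (f : X → Y) (g : Y → Z) (𝔵 : T X) :
    𝒯.map g (𝒯.map f 𝔵) = 𝒯.map (fun x => g (f x)) 𝔵 :=
  (𝒯.map_comp g f 𝔵).symm

lemma map_id_apply {X : Type u} (𝔵 : T X) : 𝒯.map (fun x => x) 𝔵 = 𝔵 :=
  congrFun 𝒯.map_id 𝔵

lemma tens_iSup {ι : Sort*} (u : V) (f : ι → V) :
    𝒯.tens u (⨆ i, f i) = ⨆ i, 𝒯.tens u (f i) := by
  rw [iSup, 𝒯.tens_sSup, iSup_range]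

lemma iSup_tens {ι : Sort*} (u : V) (f : ι → V) :
    𝒯.tens (⨆ i, f i) u = ⨆ i, 𝒯.tens (f i) u := by
  rw [𝒯.tens_comm, 𝒯.tens_iSup]
  exact iSup_congr fun i => 𝒯.tens_comm _ _

lemma tens_unit (u : V) : 𝒯.tens u 𝒯.unit = u := by
  rw [𝒯.tens_comm, 𝒯.unit_tens]

lemma iSup_unit_tens (P : Prop) (u : V) :
    𝒯.tens (⨆ _ : P, 𝒯.unit) u = ⨆ _ : P, u := by
  rw [𝒯.iSup_tens]
  exact iSup_congr fun _ => 𝒯.unit_tens u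

lemma tens_ihom_le (u w : V) : 𝒯.tens u (𝒯.ihom u w) ≤ w := by
  rw [ihom, 𝒯.tens_sSup]
  exact iSup₂_le fun _ hv => hv

lemma le_ihom {u z w : V} (h : 𝒯.tens u z ≤ w) : z ≤ 𝒯.ihom u w :=
  le_sSup h

lemma le_ihom_iff {u z w : V} : z ≤ 𝒯.ihom u w ↔ 𝒯.tens u z ≤ w :=
  ⟨fun h => (𝒯.tens_mono le_rfl h).trans (𝒯.tens_ihom_le u w), 𝒯.le_ihom⟩

lemma unit_le_ihom_iff {u w : V} : 𝒯.unit ≤ 𝒯.ihom u w ↔ u ≤ w := by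
  rw [𝒯.le_ihom_iff, 𝒯.tens_unit]

lemma ihom_mono {u w w' : V} (h : w ≤ w') : 𝒯.ihom u w ≤ 𝒯.ihom u w' :=
  𝒯.le_ihom ((𝒯.tens_ihom_le u w).trans h)

lemma ihom_anti {u u' w : V} (h : u ≤ u') : 𝒯.ihom u' w ≤ 𝒯.ihom u w :=
  𝒯.le_ihom ((𝒯.tens_mono h le_rfl).trans (𝒯.tens_ihom_le u' w))

lemma ihom_iSup_left {ι : Sort*} (f : ι → V) (w : V) :
    𝒯.ihom (⨆ i, f i) w = ⨅ i, 𝒯.ihom (f i) w := by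
  refine le_antisymm (le_iInf fun i => 𝒯.ihom_anti (le_iSup f i)) (𝒯.le_ihom ?_)
  rw [𝒯.iSup_tens]
  exact iSup_le fun i => (𝒯.tens_mono le_rfl (iInf_le _ i)).trans (𝒯.tens_ihom_le _ _)

lemma ihom_iInf {ι : Sort*} (u : V) (f : ι → V) :
    𝒯.ihom u (⨅ i, f i) = ⨅ i, 𝒯.ihom u (f i) :=
  le_antisymm (le_iInf fun i => 𝒯.ihom_mono (iInf_le _ i))
    (𝒯.le_ihom (le_iInf fun i => (𝒯.tens_mono le_rfl (iInf_le _ i)).trans (𝒯.tens_ihom_le _ _)))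

end Quantale

section Txi

variable (𝒯 : TopTheory V T)

lemma Txi_mono {X Y : Type u} {r s : X → Y → V} (h : ∀ x y, r x y ≤ s x y)
    (𝔵 : T X) (𝔶 : T Y) : 𝒯.Txi r 𝔵 𝔶 ≤ 𝒯.Txi s 𝔵 𝔶 :=
  iSup_mono fun 𝔴 => 𝒯.xi_mono _ _ (fun p => h p.1 p.2) 𝔴.1

lemma Txi_le_Txi_map {A B A' B' : Type u} {r : A → B → V} {s : A' → B' → V} {f : A → A'}
    {g : B → B'} (h : ∀ x y, r x y ≤ s (f x) (g y)) (𝔞 : T A) (𝔟 : T B) :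
    𝒯.Txi r 𝔞 𝔟 ≤ 𝒯.Txi s (𝒯.map f 𝔞) (𝒯.map g 𝔟) :=
  (𝒯.Txi_mono h 𝔞 𝔟).trans (𝒯.Txi_comp_le s f g 𝔞 𝔟)

lemma xi_le_Txi {A B C : Type u} (r : A → B → V) (j₁ : C → A) (j₂ : C → B) (𝔠 : T C) :
    𝒯.xi (𝒯.map (fun c => r (j₁ c) (j₂ c)) 𝔠) ≤ 𝒯.Txi r (𝒯.map j₁ 𝔠) (𝒯.map j₂ 𝔠) :=
  le_iSup_of_le ⟨𝒯.map (fun c => (j₁ c, j₂ c)) 𝔠, by rw [map_map], by rw [map_map]⟩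
    (by rw [map_map])

lemma unit_le_Txi {A B C : Type u} (r : A → B → V) (j₁ : C → A) (j₂ : C → B) (𝔠 : T C)
    (h : ∀ c, 𝒯.unit ≤ r (j₁ c) (j₂ c)) :
    𝒯.unit ≤ 𝒯.Txi r (𝒯.map j₁ 𝔠) (𝒯.map j₂ 𝔠) := by
  refine le_trans ?_ (𝒯.xi_le_Txi r j₁ j₂ 𝔠)
  rw [← 𝒯.xi_unit 𝔠]
  exact 𝒯.xi_mono _ _ h 𝔠

lemma Txi_le_Txi_swap {A B : Type u} (r : A → B → V) (𝔞 : T A) (𝔟 : T B) :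
    𝒯.Txi r 𝔞 𝔟 ≤ 𝒯.Txi (fun b a => r a b) 𝔟 𝔞 :=
  iSup_le fun ⟨𝔴, hw₁, hw₂⟩ => by
    simpa only [map_map, hw₁, hw₂] using 𝒯.xi_le_Txi (fun b a => r a b) Prod.snd Prod.fst 𝔴

lemma Txi_swap {A B : Type u} (r : A → B → V) (𝔞 : T A) (𝔟 : T B) :
    𝒯.Txi (fun b a => r a b) 𝔟 𝔞 = 𝒯.Txi r 𝔞 𝔟 :=
  le_antisymm (𝒯.Txi_le_Txi_swap _ 𝔟 𝔞) (𝒯.Txi_le_Txi_swap r 𝔞 𝔟)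

lemma Txi_map_right {A B B' : Type u} (r : A → B' → V) (v : B → B') (𝔞 : T A) (𝔟 : T B) :
    𝒯.Txi r 𝔞 (𝒯.map v 𝔟) = 𝒯.Txi (fun a b => r a (v b)) 𝔞 𝔟 := by
  refine le_antisymm (iSup_le fun ⟨𝔴, hw₁, hw₂⟩ => ?_) ?_
  · obtain ⟨𝔲, hu₁, hu₂⟩ := 𝒯.map_bc Prod.snd v 𝔴 𝔟 hw₂
    have hr : (fun q : {p : (A × B') × B // p.1.2 = v p.2} => r q.1.1.1 q.1.1.2) =
        fun q => r q.1.1.1 (v q.1.2) := funext fun q => by rw [q.2]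
    have h𝔞 : 𝒯.map (fun q : {p : (A × B') × B // p.1.2 = v p.2} => q.1.1.1) 𝔲 = 𝔞 := by
      rw [← hw₁, ← hu₁, map_map]
    have := 𝒯.xi_le_Txi (fun a b => r a (v b)) (fun q => q.1.1.1) (fun q => q.1.2) 𝔲
    rwa [← hr, ← map_map _ _ (fun p : A × B' => r p.1 p.2), hu₁, h𝔞, hu₂] at this
  · simpa only [map_id_apply] using 𝒯.Txi_comp_le r (fun a => a) v 𝔞 𝔟

lemma Txi_map_left {A A' B : Type u} (r : A' → B → V) (u : A → A') (𝔞 : T A) (𝔟 : T B) :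
    𝒯.Txi r (𝒯.map u 𝔞) 𝔟 = 𝒯.Txi (fun a b => r (u a) b) 𝔞 𝔟 := by
  rw [← 𝒯.Txi_swap r, Txi_map_right, Txi_swap]

end Txi

section TxiComp

variable (𝒯 : TopTheory V T)

lemma Txi_cograph {A B : Type u} (g : B → A) (𝔞 : T A) (𝔟 : T B) :
    𝒯.Txi (fun a b => ⨆ _ : g b = a, 𝒯.unit) 𝔞 𝔟 = ⨆ _ : 𝒯.map g 𝔟 = 𝔞, 𝒯.unit := by
  refine le_antisymm (iSup_le fun ⟨𝔴, hw₁, hw₂⟩ => ?_) (iSup_le fun h => ?_)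
  · have hgraph : (fun p : A × B => ⨆ _ : g p.2 = p.1, 𝒯.unit) =
        fun p => ⨆ _ : {b : B // (g b, b) = p}, 𝒯.unit := by
      funext p
      refine le_antisymm (iSup_le fun h => le_iSup_of_le ⟨p.2, by rw [h]⟩ le_rfl)
        (iSup_le fun b => le_iSup_of_le (by rw [← b.2]) le_rfl)
    rw [hgraph, ← 𝒯.xi_nat (fun b : B => (g b, b)) (fun _ => 𝒯.unit) 𝔴]
    refine iSup_le fun ⟨𝔳, hv⟩ => ?_
    have h𝔳 : 𝔳 = 𝔟 := by rw [← hw₂, ← hv, map_map, map_id_apply]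
    have hg : 𝒯.map g 𝔟 = 𝔞 := by rw [← h𝔳, ← hw₁, ← hv, map_map]
    rw [𝒯.xi_unit]
    exact le_iSup_of_le hg le_rfl
  · have := 𝒯.unit_le_Txi (fun a b => ⨆ _ : g b = a, 𝒯.unit) g (fun b => b) 𝔟
      fun b => le_iSup_of_le rfl le_rfl
    rwa [map_id_apply, h] at this

/-- `relComp r s` is `s · r`: first `r`, then `s`. -/
def relComp {A B C : Type u} (r : A → B → V) (s : B → C → V) : A → C → V :=
  fun a c => ⨆ b, 𝒯.tens (r a b) (s b c)

lemma Txi_relComp_le {A B C : Type u} (r : A → B → V) (s : B → C → V) (𝔞 : T A) (𝔠 : T C) :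
    𝒯.Txi (𝒯.relComp r s) 𝔞 𝔠 ≤ ⨆ 𝔟 : T B, 𝒯.tens (𝒯.Txi r 𝔞 𝔟) (𝒯.Txi s 𝔟 𝔠) := by
  refine iSup_le fun ⟨𝔴, hw₁, hw₂⟩ => ?_
  have hcomp : (fun p : A × C => 𝒯.relComp r s p.1 p.2) =
      fun p => ⨆ w : {w : A × B × C // (w.1, w.2.2) = p},
        𝒯.tens (r w.1.1 w.1.2.1) (s w.1.2.1 w.1.2.2) := by
    funext p
    refine le_antisymm (iSup_le fun b => le_iSup_of_le ⟨(p.1, b, p.2), rfl⟩ le_rfl) ?_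
    refine iSup_le ?_
    rintro ⟨⟨_, b, _⟩, rfl⟩
    exact le_iSup_of_le b le_rfl
  rw [hcomp, ← 𝒯.xi_nat (fun w : A × B × C => (w.1, w.2.2))
    (fun w => 𝒯.tens (r w.1 w.2.1) (s w.2.1 w.2.2)) 𝔴]
  refine iSup_le fun ⟨𝔳, hv⟩ => ?_
  have h𝔞 : 𝒯.map (fun w : A × B × C => w.1) 𝔳 = 𝔞 := by rw [← hw₁, ← hv, map_map]
  have h𝔠 : 𝒯.map (fun w : A × B × C => w.2.2) 𝔳 = 𝔠 := by rw [← hw₂, ← hv, map_map]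
  have htens := 𝒯.xi_tens (𝒯.map (fun w : A × B × C => (r w.1 w.2.1, s w.2.1 w.2.2)) 𝔳)
  simp only [map_map] at htens
  rw [htens]
  refine le_iSup_of_le (𝒯.map (fun w : A × B × C => w.2.1) 𝔳) (𝒯.tens_mono ?_ ?_)
  · simpa only [h𝔞] using 𝒯.xi_le_Txi r (fun w : A × B × C => w.1) (fun w => w.2.1) 𝔳
  · simpa only [h𝔠] using 𝒯.xi_le_Txi s (fun w : A × B × C => w.2.1) (fun w => w.2.2) 𝔳

lemma tens_Txi_le_Txi_relComp {A B C : Type u} (r : A → B → V) (s : B → C → V)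
    (𝔞 : T A) (𝔟 : T B) (𝔠 : T C) :
    𝒯.tens (𝒯.Txi r 𝔞 𝔟) (𝒯.Txi s 𝔟 𝔠) ≤ 𝒯.Txi (𝒯.relComp r s) 𝔞 𝔠 := by
  rw [Txi, iSup_tens]
  refine iSup_le ?_
  rintro ⟨𝔴₁, hw₁₁, hw₁₂⟩
  rw [Txi, tens_iSup]
  refine iSup_le ?_
  rintro ⟨𝔴₂, hw₂₁, hw₂₂⟩
  obtain ⟨𝔲, hu₁, hu₂⟩ := 𝒯.map_bc Prod.snd Prod.fst 𝔴₁ 𝔴₂ (hw₁₂.trans hw₂₁.symm)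
  have htens := 𝒯.xi_tens (𝒯.map (fun q : {p : (A × B) × B × C // p.1.2 = p.2.1} =>
    (r q.1.1.1 q.1.1.2, s q.1.2.1 q.1.2.2)) 𝔲)
  simp only [map_map] at htens
  dsimp only
  rw [← hu₁, ← hu₂, map_map, map_map, ← htens]
  have h𝔞 : 𝒯.map (fun q : {p : (A × B) × B × C // p.1.2 = p.2.1} => q.1.1.1) 𝔲 = 𝔞 := by
    rw [← hw₁₁, ← hu₁, map_map]
  have h𝔠 : 𝒯.map (fun q : {p : (A × B) × B × C // p.1.2 = p.2.1} => q.1.2.2) 𝔲 = 𝔠 := by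
    rw [← hw₂₂, ← hu₂, map_map]
  refine le_trans (𝒯.xi_mono _ (fun q => 𝒯.relComp r s q.1.1.1 q.1.2.2)
    (fun q => le_iSup_of_le q.1.2.1 (le_of_eq (by rw [q.2]))) 𝔲) ?_
  simpa only [h𝔞, h𝔠] using 𝒯.xi_le_Txi (𝒯.relComp r s) (fun q => q.1.1.1) (fun q => q.1.2.2) 𝔲

lemma Txi_Txi_le {A B : Type u} (r : A → B → V) (𝔄 : T (T A)) (𝔅 : T (T B)) :
    𝒯.Txi (𝒯.Txi r) 𝔄 𝔅 ≤ 𝒯.Txi r (𝒯.m 𝔄) (𝒯.m 𝔅) := by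
  refine iSup_le fun ⟨𝔘, hU₁, hU₂⟩ => ?_
  have hTxi : (fun P : T A × T B => 𝒯.Txi r P.1 P.2) =
      fun P => ⨆ w : {w : T (A × B) // (𝒯.map Prod.fst w, 𝒯.map Prod.snd w) = P},
        𝒯.xi (𝒯.map (fun p : A × B => r p.1 p.2) w.1) := by
    funext P
    refine le_antisymm (iSup_le fun w => le_iSup_of_le ⟨w.1, by rw [w.2.1, w.2.2]⟩ le_rfl) ?_
    refine iSup_le ?_
    rintro ⟨w, rfl⟩
    exact le_iSup_of_le ⟨w, rfl, rfl⟩ le_rfl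
  rw [hTxi, ← 𝒯.xi_nat (fun w : T (A × B) => (𝒯.map Prod.fst w, 𝒯.map Prod.snd w))
    (fun w => 𝒯.xi (𝒯.map (fun p : A × B => r p.1 p.2) w)) 𝔘]
  refine iSup_le fun ⟨𝔳, hv⟩ => ?_
  have hxi : 𝒯.xi (𝒯.map (fun w => 𝒯.xi (𝒯.map (fun p : A × B => r p.1 p.2) w)) 𝔳) =
      𝒯.xi (𝒯.map (fun p : A × B => r p.1 p.2) (𝒯.m 𝔳)) := by
    rw [𝒯.m_nat, 𝒯.xi_m, map_map]
  have h₁ : 𝒯.map Prod.fst (𝒯.m 𝔳) = 𝒯.m 𝔄 := by rw [𝒯.m_nat, ← hU₁, ← hv, map_map]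
  have h₂ : 𝒯.map Prod.snd (𝒯.m 𝔳) = 𝒯.m 𝔅 := by rw [𝒯.m_nat, ← hU₂, ← hv, map_map]
  rw [hxi]
  exact le_iSup_of_le ⟨𝒯.m 𝔳, h₁, h₂⟩ le_rfl

lemma Txi_m_le {A B : Type u} (r : A → B → V) (𝔞 : T A) (𝔅 : T (T B)) :
    𝒯.Txi r 𝔞 (𝒯.m 𝔅) ≤ ⨆ 𝔄 : {𝔄 : T (T A) // 𝒯.m 𝔄 = 𝔞}, 𝒯.Txi (𝒯.Txi r) 𝔄.1 𝔅 := by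
  refine iSup_le fun ⟨𝔴, hw₁, hw₂⟩ => ?_
  obtain ⟨𝔛, hX₁, hX₂⟩ := 𝒯.m_bc Prod.snd 𝔅 𝔴 hw₂.symm
  have hm : 𝒯.m (𝒯.map (𝒯.map Prod.fst) 𝔛) = 𝔞 := by rw [← 𝒯.m_nat, hX₂, hw₁]
  have hxi : 𝒯.xi (𝒯.map (fun p : A × B => r p.1 p.2) 𝔴) =
      𝒯.xi (𝒯.map (fun w => 𝒯.xi (𝒯.map (fun p : A × B => r p.1 p.2) w)) 𝔛) := by
    rw [← hX₂, 𝒯.m_nat, 𝒯.xi_m, map_map]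
  refine le_iSup_of_le ⟨_, hm⟩ ?_
  rw [hxi]
  refine le_trans (𝒯.xi_mono _ (fun w => 𝒯.Txi r (𝒯.map Prod.fst w) (𝒯.map Prod.snd w))
    (fun w => le_iSup_of_le ⟨w, rfl, rfl⟩ le_rfl) 𝔛) ?_
  simpa only [hX₁] using 𝒯.xi_le_Txi (𝒯.Txi r) (𝒯.map Prod.fst) (𝒯.map Prod.snd) 𝔛

end TxiComp

section Kleisli

lemma le_kleisli (𝒯 : TopTheory V T) {X Y Z : Type u} (β : T Y → Z → V) (α : T X → Y → V)
    (𝔛 : T (T X)) (𝔶 : T Y) (z : Z) :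
    𝒯.tens (𝒯.Txi α 𝔛 𝔶) (β 𝔶 z) ≤ 𝒯.kleisli β α (𝒯.m 𝔛) z :=
  le_iSup_of_le ⟨𝔛, rfl⟩ (le_iSup_of_le 𝔶 le_rfl)

lemma kleisli_le {X Y Z : Type u} {β : T Y → Z → V} {α : T X → Y → V} {z : Z}
    {w : T X → V} (h : ∀ 𝔛 𝔶, 𝒯.tens (𝒯.Txi α 𝔛 𝔶) (β 𝔶 z) ≤ w (𝒯.m 𝔛)) (𝔵 : T X) :
    𝒯.kleisli β α 𝔵 z ≤ w 𝔵 := by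
  refine iSup_le ?_
  rintro ⟨𝔛, rfl⟩
  exact iSup_le (h 𝔛)

lemma TCatStr.tens_Txi_le {X : Type u} (a : 𝒯.TCatStr X) (𝔛 : T (T X)) (𝔶 : T X) (x : X) :
    𝒯.tens (𝒯.Txi a.rel 𝔛 𝔶) (a.rel 𝔶 x) ≤ a.rel (𝒯.m 𝔛) x :=
  (𝒯.le_kleisli _ _ 𝔛 𝔶 x).trans (a.comp _ x)

lemma TCatStr.Txi_e_le {X : Type u} (a : 𝒯.TCatStr X) (𝔛 : T (T X)) (x : X) :
    𝒯.Txi a.rel 𝔛 (𝒯.e x) ≤ a.rel (𝒯.m 𝔛) x :=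
  calc 𝒯.Txi a.rel 𝔛 (𝒯.e x) = 𝒯.tens (𝒯.Txi a.rel 𝔛 (𝒯.e x)) 𝒯.unit := (𝒯.tens_unit _).symm
    _ ≤ 𝒯.tens (𝒯.Txi a.rel 𝔛 (𝒯.e x)) (a.rel (𝒯.e x) x) := 𝒯.tens_mono le_rfl (a.le_refl x)
    _ ≤ a.rel (𝒯.m 𝔛) x := a.tens_Txi_le 𝔛 (𝒯.e x) x

end Kleisli

section Separation

lemma funEquiv_of_unit_le {A X : Type u} {a : 𝒯.TCatStr X} {f g : A → X}
    (h₁ : ∀ v, 𝒯.unit ≤ a.rel (𝒯.e (f v)) (g v)) (h₂ : ∀ v, 𝒯.unit ≤ a.rel (𝒯.e (g v)) (f v)) :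
    FunEquiv a f g :=
  fun 𝔶 v => le_antisymm (whisker a (h₁ v) 𝔶) (whisker a (h₂ v) 𝔶)

lemma FunEquiv.unit_le {A X : Type u} {a : 𝒯.TCatStr X} {f g : A → X} (h : FunEquiv a f g)
    (v : A) : 𝒯.unit ≤ a.rel (𝒯.e (f v)) (g v) :=
  h (𝒯.e (f v)) v ▸ a.le_refl (f v)

lemma FunEquiv.symm {A X : Type u} {a : 𝒯.TCatStr X} {f g : A → X} (h : FunEquiv a f g) :
    FunEquiv a g f :=
  fun 𝔶 v => (h 𝔶 v).symm

lemma Separated.eq_of_unit_le {A X : Type u} {a : 𝒯.TCatStr X} (ha : Separated a)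
    {as : 𝒯.TCatStr A} {f g : A → X} (hf : IsTFunctor as a f) (hg : IsTFunctor as a g)
    (h₁ : ∀ v, 𝒯.unit ≤ a.rel (𝒯.e (f v)) (g v)) (h₂ : ∀ v, 𝒯.unit ≤ a.rel (𝒯.e (g v)) (f v)) :
    f = g :=
  ha A as f g hf hg (funEquiv_of_unit_le h₁ h₂)

end Separation

section Presheaf

variable {X : Type u}

def evalRel (a : 𝒯.TCatStr X) : T X → Hat a → V := fun 𝔵 ψ => ψ.1 𝔵

lemma tens_unitRel (𝒯 : TopTheory V T) (u : V) (𝔶 : T PUnit.{u + 1}) :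
    𝒯.tens u (𝒯.unitRel PUnit 𝔶 PUnit.unit) = ⨆ _ : 𝔶 = 𝒯.e PUnit.unit, u := by
  rw [unitRel, 𝒯.tens_comm, 𝒯.iSup_unit_tens]

lemma Txi_punit_e (𝒯 : TopTheory V T) {A B : Type u} (r : T A → B → V) (b : B)
    (𝔷 : T (T A)) :
    𝒯.Txi (fun 𝔞 (_ : PUnit.{u + 1}) => r 𝔞 b) 𝔷 (𝒯.e PUnit.unit) = 𝒯.Txi r 𝔷 (𝒯.e b) := by
  rw [← 𝒯.e_nat (fun _ => b) PUnit.unit, 𝒯.Txi_map_right]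

lemma Hat.tens_Txi_le {a : 𝒯.TCatStr X} (ψ : Hat a) (𝔷 : T (T X)) (𝔵 : T X) :
    𝒯.tens (𝒯.Txi a.rel 𝔷 𝔵) (ψ.1 𝔵) ≤ ψ.1 (𝒯.m 𝔷) :=
  (𝒯.le_kleisli (fun 𝔵 _ => ψ.1 𝔵) _ 𝔷 𝔵 PUnit.unit).trans (ψ.2.1 _ _)

lemma Hat.Txi_le {a : 𝒯.TCatStr X} (ψ : Hat a) (𝔷 : T (T X)) :
    𝒯.Txi (fun 𝔵 (_ : PUnit.{u + 1}) => ψ.1 𝔵) 𝔷 (𝒯.e PUnit.unit) ≤ ψ.1 (𝒯.m 𝔷) := by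
  refine le_trans ?_ ((𝒯.le_kleisli _ _ 𝔷 (𝒯.e PUnit.unit) PUnit.unit).trans (ψ.2.2 _ _))
  rw [𝒯.tens_unitRel]
  exact le_iSup_of_le rfl le_rfl

lemma isPresheaf_of_le (a : 𝒯.TCatStr X) (F : T X → V)
    (h₁ : ∀ 𝔷 𝔵, 𝒯.tens (𝒯.Txi a.rel 𝔷 𝔵) (F 𝔵) ≤ F (𝒯.m 𝔷))
    (h₂ : ∀ 𝔷, 𝒯.Txi (fun 𝔵 (_ : PUnit.{u + 1}) => F 𝔵) 𝔷 (𝒯.e PUnit.unit) ≤ F (𝒯.m 𝔷)) :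
    IsPresheaf a F := by
  refine ⟨fun 𝔵 _ => kleisli_le h₁ 𝔵, fun 𝔵 _ => kleisli_le (fun 𝔷 𝔶 => ?_) 𝔵⟩
  rw [𝒯.tens_unitRel]
  exact iSup_le fun h => h ▸ h₂ 𝔷

lemma powRel_map_val (a : 𝒯.TCatStr X) (𝔭 : T (Hat a)) (ψ : Hat a) :
    𝒯.powRel X (𝒯.map Subtype.val 𝔭) ψ.1 =
      ⨅ 𝔷 : T (T X), 𝒯.ihom (𝒯.Txi (evalRel a) 𝔷 𝔭) (ψ.1 (𝒯.m 𝔷)) := by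
  have hval : ∀ 𝔷, 𝒯.Txi (fun 𝔵 (φ : T X → V) => φ 𝔵) 𝔷 (𝒯.map Subtype.val 𝔭) =
      𝒯.Txi (evalRel a) 𝔷 𝔭 := fun 𝔷 => 𝒯.Txi_map_right _ _ 𝔷 𝔭
  refine le_antisymm (le_iInf fun 𝔷 => 𝒯.le_ihom ?_) (le_iInf fun ⟨𝔮, h𝔮⟩ => ?_)
  · rw [← hval, Txi, iSup_tens]
    refine iSup_le ?_
    rintro ⟨𝔴, rfl, hw⟩
    exact (𝒯.tens_mono le_rfl (iInf_le _ ⟨𝔴, hw⟩)).trans (𝒯.tens_ihom_le _ _)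
  · refine (iInf_le _ (𝒯.map Prod.fst 𝔮)).trans (𝒯.ihom_anti ?_)
    rw [← hval]
    exact le_iSup_of_le ⟨𝔮, rfl, h𝔮⟩ le_rfl

variable {a : 𝒯.TCatStr X} {hs : 𝒯.TCatStr (Hat a)}

lemma IsHatStr.rel_eq (hhs : IsHatStr a hs) (𝔭 : T (Hat a)) (ψ : Hat a) :
    hs.rel 𝔭 ψ = ⨅ 𝔷 : T (T X), 𝒯.ihom (𝒯.Txi (evalRel a) 𝔷 𝔭) (ψ.1 (𝒯.m 𝔷)) := by
  rw [hhs, powRel_map_val]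

lemma IsHatStr.tens_Txi_le (hhs : IsHatStr a hs) (𝔷 : T (T X)) (𝔭 : T (Hat a)) (ψ : Hat a) :
    𝒯.tens (𝒯.Txi (evalRel a) 𝔷 𝔭) (hs.rel 𝔭 ψ) ≤ ψ.1 (𝒯.m 𝔷) := by
  rw [hhs.rel_eq]
  exact (𝒯.tens_mono le_rfl (iInf_le _ 𝔷)).trans (𝒯.tens_ihom_le _ _)

lemma IsHatStr.le_rel (hhs : IsHatStr a hs) {w : V} {𝔭 : T (Hat a)} {ψ : Hat a}
    (h : ∀ 𝔷, 𝒯.tens (𝒯.Txi (evalRel a) 𝔷 𝔭) w ≤ ψ.1 (𝒯.m 𝔷)) : w ≤ hs.rel 𝔭 ψ := by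
  rw [hhs.rel_eq]
  exact le_iInf fun 𝔷 => 𝒯.le_ihom (h 𝔷)

lemma IsHatStr.rel_mono (hhs : IsHatStr a hs) {𝔭 : T (Hat a)} {ψ ψ' : Hat a}
    (h : ∀ 𝔵, ψ.1 𝔵 ≤ ψ'.1 𝔵) : hs.rel 𝔭 ψ ≤ hs.rel 𝔭 ψ' := by
  rw [hhs.rel_eq, hhs.rel_eq]
  exact iInf_mono fun 𝔷 => 𝒯.ihom_mono (h _)

lemma IsYoneda.Txi_evalRel_map {y : X → Hat a} (hy : IsYoneda a y) (𝔷 : T (T X)) (𝔵 : T X) :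
    𝒯.Txi (evalRel a) 𝔷 (𝒯.map y 𝔵) = 𝒯.Txi a.rel 𝔷 𝔵 := by
  rw [𝒯.Txi_map_right]
  congr 1
  funext 𝔷₀ x
  exact hy x 𝔷₀

lemma IsHatStr.rel_map_yoneda (hhs : IsHatStr a hs) {y : X → Hat a} (hy : IsYoneda a y)
    (𝔵 : T X) (ψ : Hat a) : hs.rel (𝒯.map y 𝔵) ψ = ψ.1 𝔵 := by
  refine le_antisymm ?_ (hhs.le_rel fun 𝔷 => ?_)
  · have he : 𝒯.unit ≤ 𝒯.Txi (evalRel a) (𝒯.map 𝒯.e 𝔵) (𝒯.map y 𝔵) :=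
      𝒯.unit_le_Txi (evalRel a) 𝒯.e y 𝔵 fun x =>
        (a.le_refl x).trans (hy x (𝒯.e x)).ge
    calc hs.rel (𝒯.map y 𝔵) ψ = 𝒯.tens 𝒯.unit (hs.rel (𝒯.map y 𝔵) ψ) := (𝒯.unit_tens _).symm
      _ ≤ ψ.1 (𝒯.m (𝒯.map 𝒯.e 𝔵)) := (𝒯.tens_mono he le_rfl).trans (hhs.tens_Txi_le _ _ _)
      _ = ψ.1 𝔵 := by rw [𝒯.m_map_e]
  · rw [hy.Txi_evalRel_map]
    exact ψ.tens_Txi_le 𝔷 𝔵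

lemma IsHatStr.isTFunctor_yoneda (hhs : IsHatStr a hs) {y : X → Hat a} (hy : IsYoneda a y) :
    IsTFunctor a hs y := fun 𝔵 x => by
  rw [hhs.rel_map_yoneda hy, hy]

lemma IsHatStr.unit_le_rel_e_iff (hhs : IsHatStr a hs) (χ ψ : Hat a) :
    𝒯.unit ≤ hs.rel (𝒯.e χ) ψ ↔ ∀ 𝔵, χ.1 𝔵 ≤ ψ.1 𝔵 := by
  refine ⟨fun h 𝔵 => ?_, fun h => hhs.le_rel fun 𝔷 => ?_⟩
  · calc χ.1 𝔵 = 𝒯.tens (evalRel a 𝔵 χ) 𝒯.unit := (𝒯.tens_unit _).symm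
      _ ≤ 𝒯.tens (𝒯.Txi (evalRel a) (𝒯.e 𝔵) (𝒯.e χ)) (hs.rel (𝒯.e χ) ψ) :=
          𝒯.tens_mono (𝒯.le_Txi_e (evalRel a) 𝔵 χ) h
      _ ≤ ψ.1 𝔵 := by simpa only [𝒯.m_e] using hhs.tens_Txi_le (𝒯.e 𝔵) (𝒯.e χ) ψ
  · rw [𝒯.tens_unit, ← 𝒯.Txi_punit_e (evalRel a) χ]
    exact χ.Txi_le 𝔷 |>.trans (h _)

lemma IsHatStr.separated (hhs : IsHatStr a hs) : Separated hs := by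
  intro A as f g _ _ hfg
  funext v
  refine Subtype.ext (funext fun 𝔵 => le_antisymm ?_ ?_)
  · exact (hhs.unit_le_rel_e_iff _ _).1 (hfg.unit_le v) 𝔵
  · exact (hhs.unit_le_rel_e_iff _ _).1 (hfg.symm.unit_le v) 𝔵

end Presheaf

section TxiKleisli

variable (𝒯 : TopTheory V T)

lemma Txi_kleisli_le {X Y Z : Type u} (β : T Y → Z → V) (α : T X → Y → V)
    (𝔷 : T (T X)) (𝔠 : T Z) :
    𝒯.Txi (𝒯.kleisli β α) 𝔷 𝔠 ≤ ⨆ 𝔅 : {𝔅 : T (T (T X)) // 𝒯.map 𝒯.m 𝔅 = 𝔷},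
      ⨆ 𝔚 : T (T Y), 𝒯.tens (𝒯.Txi α (𝒯.m 𝔅.1) (𝒯.m 𝔚)) (𝒯.Txi β 𝔚 𝔠) := by
  have hdecomp : 𝒯.kleisli β α =
      𝒯.relComp (fun 𝔵 𝔛 => ⨆ _ : 𝒯.m 𝔛 = 𝔵, 𝒯.unit) (𝒯.relComp (𝒯.Txi α) β) := by
    funext 𝔵 z
    refine le_antisymm (iSup_le fun ⟨𝔛, h⟩ => iSup_le fun 𝔶 => le_iSup_of_le 𝔛 ?_) ?_
    · rw [𝒯.iSup_unit_tens]
      exact le_iSup_of_le h (le_iSup_of_le 𝔶 le_rfl)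
    · refine iSup_le fun 𝔛 => ?_
      rw [𝒯.iSup_unit_tens]
      exact iSup_le fun h => le_iSup_of_le ⟨𝔛, h⟩ le_rfl
  rw [hdecomp]
  refine (𝒯.Txi_relComp_le _ _ 𝔷 𝔠).trans (iSup_le fun 𝔅 => ?_)
  rw [𝒯.Txi_cograph, 𝒯.iSup_unit_tens]
  refine iSup_le fun h𝔅 => (𝒯.Txi_relComp_le _ _ 𝔅 𝔠).trans (iSup_le fun 𝔚 => ?_)
  exact le_iSup_of_le ⟨𝔅, h𝔅⟩ (le_iSup_of_le 𝔚 (𝒯.tens_mono (𝒯.Txi_Txi_le α 𝔅 𝔚) le_rfl))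

lemma tens_Txi_m_le {A B C : Type u} {r : T A → B → V} {ρ : T B → C → V} {τ : T A → C → V}
    (h : ∀ 𝔷 𝔟 c, 𝒯.tens (𝒯.Txi r 𝔷 𝔟) (ρ 𝔟 c) ≤ τ (𝒯.m 𝔷) c)
    (𝔷 : T (T A)) (𝔓 : T (T B)) (𝔠 : T C) :
    𝒯.tens (𝒯.Txi r 𝔷 (𝒯.m 𝔓)) (𝒯.Txi ρ 𝔓 𝔠) ≤
      ⨆ 𝔷₂ : {𝔷₂ : T (T (T A)) // 𝒯.m 𝔷₂ = 𝔷}, 𝒯.Txi τ (𝒯.map 𝒯.m 𝔷₂.1) 𝔠 := by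
  refine (𝒯.tens_mono (𝒯.Txi_m_le r 𝔷 𝔓) le_rfl).trans ?_
  rw [iSup_tens]
  refine iSup_mono fun 𝔷₂ => (𝒯.tens_Txi_le_Txi_relComp _ ρ 𝔷₂.1 𝔓 𝔠).trans ?_
  rw [𝒯.Txi_map_left]
  exact 𝒯.Txi_mono (fun 𝔷₀ c => iSup_le fun 𝔭 => h 𝔷₀ 𝔭 c) 𝔷₂.1 𝔠

end TxiKleisli

section HatMap

variable {X Y : Type u}

lemma Txi_modCostar (b : 𝒯.TCatStr Y) (f : X → Y) (𝔜 : T (T Y)) (𝔵 : T X) :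
    𝒯.Txi (modCostar b f) 𝔜 𝔵 = 𝒯.Txi b.rel 𝔜 (𝒯.map f 𝔵) :=
  (𝒯.Txi_map_right b.rel f 𝔜 𝔵).symm

lemma le_hatMapRel_map (b : 𝒯.TCatStr Y) (f : X → Y) (ψ : T X → V) (𝔵 : T X) :
    ψ 𝔵 ≤ hatMapRel b f ψ (𝒯.map f 𝔵) := by
  have he : 𝒯.unit ≤ 𝒯.Txi (modCostar b f) (𝒯.map (fun x => 𝒯.e (f x)) 𝔵) (𝒯.map (fun x => x) 𝔵) :=
    𝒯.unit_le_Txi _ _ _ 𝔵 fun x => b.le_refl (f x)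
  rw [← map_map, map_id_apply] at he
  calc ψ 𝔵 = 𝒯.tens 𝒯.unit (ψ 𝔵) := (𝒯.unit_tens _).symm
    _ ≤ 𝒯.kleisli (fun 𝔵 _ => ψ 𝔵) (modCostar b f) (𝒯.m (𝒯.map 𝒯.e (𝒯.map f 𝔵))) PUnit.unit :=
        (𝒯.tens_mono he le_rfl).trans
          (𝒯.le_kleisli (fun 𝔵 (_ : PUnit.{u + 1}) => ψ 𝔵) (modCostar b f) _ 𝔵 PUnit.unit)
    _ = hatMapRel b f ψ (𝒯.map f 𝔵) := by rw [𝒯.m_map_e]; rfl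

lemma hatMapRel_le {b : 𝒯.TCatStr Y} {f : X → Y} {ψ : T X → V} (φ : Hat b)
    (h : ∀ 𝔵, ψ 𝔵 ≤ φ.1 (𝒯.map f 𝔵)) (𝔶 : T Y) : hatMapRel b f ψ 𝔶 ≤ φ.1 𝔶 :=
  kleisli_le (fun 𝔜 𝔵 => by
    rw [Txi_modCostar]
    exact (𝒯.tens_mono le_rfl (h 𝔵)).trans (φ.tens_Txi_le 𝔜 _)) 𝔶

lemma tens_le_hatMapRel (b : 𝒯.TCatStr Y) (f : X → Y) (F : T X → V) {𝔅 : T (T (T Y))}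
    {𝔴 : T (T Y)} (h𝔅 : 𝒯.map 𝒯.m 𝔅 = 𝔴) (𝔵 : T X) :
    𝒯.tens (𝒯.Txi (modCostar b f) (𝒯.m 𝔅) 𝔵) (F 𝔵) ≤ hatMapRel b f F (𝒯.m 𝔴) :=
  (𝒯.le_kleisli (fun 𝔵 (_ : PUnit.{u + 1}) => F 𝔵) (modCostar b f) _ 𝔵 PUnit.unit).trans_eq
    (by rw [𝒯.m_assoc, h𝔅]; rfl)

lemma isPresheaf_hatMapRel (b : 𝒯.TCatStr Y) (f : X → Y) (F : T X → V)
    (hF : ∀ 𝔚, 𝒯.Txi (fun 𝔵 (_ : PUnit.{u + 1}) => F 𝔵) 𝔚 (𝒯.e PUnit.unit) ≤ F (𝒯.m 𝔚)) :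
    IsPresheaf b (hatMapRel b f F) := by
  refine isPresheaf_of_le b _ (fun 𝔜₁ 𝔶 => ?_) (fun 𝔷 => ?_)
  · rw [hatMapRel, kleisli, 𝒯.tens_iSup]
    refine iSup_le ?_
    rintro ⟨𝔜, rfl⟩
    rw [𝒯.tens_iSup]
    refine iSup_le fun 𝔵 => ?_
    rw [← 𝒯.tens_assoc]
    refine (𝒯.tens_mono (𝒯.tens_Txi_m_le (ρ := modCostar b f) (τ := modCostar b f)
      (fun 𝔷 𝔶 x => b.tens_Txi_le 𝔷 𝔶 (f x)) 𝔜₁ 𝔜 𝔵) le_rfl).trans ?_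
    rw [iSup_tens]
    refine iSup_le fun ⟨𝔄, h𝔄⟩ => (𝒯.le_kleisli (fun 𝔵 (_ : PUnit.{u + 1}) => F 𝔵)
      (modCostar b f) _ 𝔵 PUnit.unit).trans_eq ?_
    rw [← 𝒯.m_assoc, h𝔄]
    rfl
  · refine (𝒯.Txi_kleisli_le (fun 𝔵 _ => F 𝔵) (modCostar b f) 𝔷 _).trans ?_
    refine iSup_le fun ⟨𝔅, h𝔅⟩ => iSup_le fun 𝔚 => ?_
    exact (𝒯.tens_mono le_rfl (hF 𝔚)).trans (tens_le_hatMapRel b f F h𝔅 _)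

end HatMap

section HatFunctor

variable {X Y : Type u} {a : 𝒯.TCatStr X} {b : 𝒯.TCatStr Y}
  {hsa : 𝒯.TCatStr (Hat a)} {hsb : 𝒯.TCatStr (Hat b)}

lemma IsHatMap.isTFunctor {f : X → Y} {fh : Hat a → Hat b} (hhsa : IsHatStr a hsa)
    (hhsb : IsHatStr b hsb) (hfh : IsHatMap a b f fh) : IsTFunctor hsa hsb fh := by
  intro 𝔭 ψ
  refine hhsb.le_rel fun 𝔷 => ?_
  have hrel : 𝒯.Txi (evalRel b) 𝔷 (𝒯.map fh 𝔭) =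
      𝒯.Txi (𝒯.kleisli (evalRel a) (modCostar b f)) 𝔷 𝔭 := by
    rw [𝒯.Txi_map_right]
    congr 1
    funext 𝔶 ψ₀
    exact hfh ψ₀ 𝔶
  rw [hrel, hfh ψ (𝒯.m 𝔷)]
  refine (𝒯.tens_mono (𝒯.Txi_kleisli_le _ _ 𝔷 𝔭) le_rfl).trans ?_
  rw [iSup_tens]
  refine iSup_le fun ⟨𝔅, h𝔅⟩ => ?_
  rw [iSup_tens]
  refine iSup_le fun 𝔚 => ?_
  rw [𝒯.tens_assoc]
  exact (𝒯.tens_mono le_rfl (hhsa.tens_Txi_le 𝔚 𝔭 ψ)).trans (tens_le_hatMapRel b f _ h𝔅 _)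

def invMapRel (f : X → Y) (φ : Hat b) : T X → V := fun 𝔵 => φ.1 (𝒯.map f 𝔵)

lemma isPresheaf_invMapRel {f : X → Y} (hf : IsTFunctor a b f) (φ : Hat b) :
    IsPresheaf a (invMapRel f φ) := by
  refine isPresheaf_of_le a _ (fun 𝔷 𝔵 => ?_) (fun 𝔷 => ?_)
  · refine (𝒯.tens_mono (𝒯.Txi_le_Txi_map (fun 𝔷₀ x => hf 𝔷₀ x) 𝔷 𝔵) le_rfl).trans ((φ.tens_Txi_le _ _).trans_eq ?_)
    rw [← 𝒯.m_nat]
    rfl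
  · refine (le_of_eq (𝒯.Txi_map_left (fun 𝔶 (_ : PUnit.{u + 1}) => φ.1 𝔶) (𝒯.map f) 𝔷 _).symm).trans
      ((φ.Txi_le _).trans_eq ?_)
    rw [← 𝒯.m_nat]
    rfl

def invMap {f : X → Y} (hf : IsTFunctor a b f) : Hat b → Hat a :=
  fun φ => ⟨invMapRel f φ, isPresheaf_invMapRel hf φ⟩

lemma isTFunctor_invMap {f : X → Y} (hhsa : IsHatStr a hsa) (hhsb : IsHatStr b hsb)
    (hf : IsTFunctor a b f) : IsTFunctor hsb hsa (invMap hf) := by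
  intro 𝔮 φ
  refine hhsa.le_rel fun 𝔷 => ?_
  have hrel : 𝒯.Txi (evalRel a) 𝔷 (𝒯.map (invMap hf) 𝔮) =
      𝒯.Txi (evalRel b) (𝒯.map (𝒯.map f) 𝔷) 𝔮 := by
    rw [𝒯.Txi_map_right, 𝒯.Txi_map_left]
    rfl
  rw [hrel]
  refine (hhsb.tens_Txi_le _ 𝔮 φ).trans_eq ?_
  rw [← 𝒯.m_nat]
  rfl

lemma IsHatMap.isLeftAdjoint {f : X → Y} {fh : Hat a → Hat b} (hhsa : IsHatStr a hsa)
    (hhsb : IsHatStr b hsb) (hf : IsTFunctor a b f) (hfh : IsHatMap a b f fh) :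
    IsLeftAdjoint hsa hsb fh := by
  refine ⟨hfh.isTFunctor hhsa hhsb, invMap hf, isTFunctor_invMap hhsa hhsb hf,
    fun 𝔭 ψ => hhsa.rel_mono fun 𝔵 => ?_, fun 𝔮 φ => hhsb.rel_mono fun 𝔶 => ?_⟩
  · change ψ.1 𝔵 ≤ (fh ψ).1 (𝒯.map f 𝔵)
    rw [hfh]
    exact le_hatMapRel_map b f ψ.1 𝔵
  · rw [hfh]
    exact hatMapRel_le φ (fun _ => le_rfl) 𝔶

lemma IsHatMap.comp_yoneda {ya : X → Hat a} {yb : Y → Hat b} {f : X → Y} {fh : Hat a → Hat b}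
    (hya : IsYoneda a ya) (hyb : IsYoneda b yb) (hf : IsTFunctor a b f)
    (hfh : IsHatMap a b f fh) : fh ∘ ya = yb ∘ f := by
  funext x
  refine Subtype.ext (funext fun 𝔶 => le_antisymm ?_ ?_)
  · rw [Function.comp_apply, hfh]
    exact hatMapRel_le (yb (f x)) (fun 𝔵 => by rw [hya, hyb]; exact hf 𝔵 x) 𝔶
  · change (yb (f x)).1 𝔶 ≤ (fh (ya x)).1 𝔶
    rw [hyb, hfh]
    calc b.rel 𝔶 (f x) = 𝒯.tens (modCostar b f 𝔶 x) 𝒯.unit := (𝒯.tens_unit _).symm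
      _ ≤ 𝒯.tens (𝒯.Txi (modCostar b f) (𝒯.e 𝔶) (𝒯.e x)) ((ya x).1 (𝒯.e x)) :=
          𝒯.tens_mono (𝒯.le_Txi_e _ 𝔶 x) ((a.le_refl x).trans (hya x _).ge)
      _ ≤ hatMapRel b f (ya x).1 (𝒯.m (𝒯.e 𝔶)) :=
          𝒯.le_kleisli (fun 𝔵 (_ : PUnit.{u + 1}) => (ya x).1 𝔵) _ _ _ PUnit.unit
      _ = hatMapRel b f (ya x).1 𝔶 := by rw [𝒯.m_e]

lemma IsHatMap.funLE {f g : X → Y} {fh gh : Hat a → Hat b} (hhsb : IsHatStr b hsb)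
    (hfh : IsHatMap a b f fh) (hgh : IsHatMap a b g gh) (hle : funLE b f g) :
    funLE hsb fh gh := fun 𝔭 ψ => hhsb.rel_mono fun 𝔶 => by
  rw [hfh, hgh]
  exact kleisli_le (fun 𝔜 𝔵 => (𝒯.tens_mono (𝒯.Txi_mono (fun 𝔶₀ x => hle 𝔶₀ x) 𝔜 𝔵)
    le_rfl).trans (𝒯.le_kleisli (fun 𝔵 (_ : PUnit.{u + 1}) => ψ.1 𝔵) _ _ _ _)) 𝔶

end HatFunctor

section Adjunction

variable {X Y : Type u} {a : 𝒯.TCatStr X} {b : 𝒯.TCatStr Y}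

lemma IsAdjunction.rel_map_eq {f : X → Y} {g : Y → X} (hf : IsTFunctor a b f)
    (hg : IsTFunctor b a g) (hadj : IsAdjunction a b f g) (𝔵 : T X) (y : Y) :
    b.rel (𝒯.map f 𝔵) y = a.rel 𝔵 (g y) := by
  refine le_antisymm ((hg _ _).trans ?_) ((hf 𝔵 (g y)).trans (hadj.2 _ y))
  have h := star_transport (a := a) (f := fun x => g (f x)) (g := fun x => x)
    (fun x => (a.le_refl x).trans (hadj.1 (𝒯.e x) x)) 𝔵 (g y)
  rwa [map_id_apply, ← map_map] at h

variable {hs : 𝒯.TCatStr (Hat a)} {y : X → Hat a} {sup : Hat a → X}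

lemma le_rel_sup (hhs : IsHatStr a hs) (hy : IsYoneda a y) (hsup : IsTFunctor hs a sup)
    (hsupy : ∀ x, sup (y x) = x) (φ : Hat a) (𝔵 : T X) : φ.1 𝔵 ≤ a.rel 𝔵 (sup φ) :=
  calc φ.1 𝔵 = hs.rel (𝒯.map y 𝔵) φ := (hhs.rel_map_yoneda hy 𝔵 φ).symm
    _ ≤ a.rel (𝒯.map sup (𝒯.map y 𝔵)) (sup φ) := hsup _ _
    _ = a.rel 𝔵 (sup φ) := by rw [map_map, funext hsupy, map_id_apply]

lemma unit_le_rel_sup_sup (hhs : IsHatStr a hs) (hy : IsYoneda a y)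
    (hsup : IsTFunctor hs a sup) (hadj : IsAdjunction hs a sup y) (hsupy : ∀ x, sup (y x) = x)
    {χ₁ χ₂ : Hat a} (h : ∀ 𝔵, χ₁.1 𝔵 ≤ χ₂.1 𝔵) :
    𝒯.unit ≤ a.rel (𝒯.e (sup χ₁)) (sup χ₂) := by
  rw [← 𝒯.e_nat sup χ₁, hadj.rel_map_eq hsup (hhs.isTFunctor_yoneda hy)]
  refine (hhs.unit_le_rel_e_iff _ _).2 fun 𝔵 => ?_
  rw [hy]
  exact (h 𝔵).trans (le_rel_sup hhs hy hsup hsupy χ₂ 𝔵)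

end Adjunction

section KockZoeberlein

variable {X : Type u} {a : 𝒯.TCatStr X} {hs : 𝒯.TCatStr (Hat a)} {y : X → Hat a}

lemma hatMapRel_yoneda_le (hhs : IsHatStr a hs) (hy : IsYoneda a y) (ψ : Hat a)
    (𝔭 : T (Hat a)) : hatMapRel hs y ψ.1 𝔭 ≤ hs.rel 𝔭 ψ := by
  refine kleisli_le (w := fun 𝔭 => hs.rel 𝔭 ψ) (fun 𝔓 𝔵 => hhs.le_rel fun 𝔷 => ?_) 𝔭
  rw [← 𝒯.tens_assoc]
  refine (𝒯.tens_mono (𝒯.tens_Txi_m_le (ρ := modCostar hs y) (τ := a.rel)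
    (fun 𝔷₀ 𝔭₀ x => (hhs.tens_Txi_le 𝔷₀ 𝔭₀ (y x)).trans_eq (hy x _)) 𝔷 𝔓 𝔵) le_rfl).trans ?_
  rw [iSup_tens]
  refine iSup_le fun ⟨𝔷₂, h𝔷₂⟩ => (ψ.tens_Txi_le _ 𝔵).trans_eq ?_
  rw [← 𝒯.m_assoc, h𝔷₂]

lemma hatMapRel_yoneda_map (hhs : IsHatStr a hs) (hy : IsYoneda a y) (ψ : Hat a) (𝔵 : T X) :
    hatMapRel hs y ψ.1 (𝒯.map y 𝔵) = ψ.1 𝔵 :=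
  le_antisymm ((hatMapRel_yoneda_le hhs hy ψ _).trans_eq (hhs.rel_map_yoneda hy 𝔵 ψ))
    (le_hatMapRel_map hs y ψ.1 𝔵)

lemma funLE_hatMap_yoneda {hs₂ : 𝒯.TCatStr (Hat hs)} {y₂ : Hat a → Hat hs}
    {yh : Hat a → Hat hs} (hhs : IsHatStr a hs) (hhs₂ : IsHatStr hs hs₂) (hy : IsYoneda a y)
    (hy₂ : IsYoneda hs y₂) (hyh : IsHatMap a hs y yh) : funLE hs₂ yh y₂ :=
  fun _ ψ => hhs₂.rel_mono fun 𝔭 => by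
    rw [hyh, hy₂]
    exact hatMapRel_yoneda_le hhs hy ψ 𝔭

end KockZoeberlein

section Cocomplete

lemma extend_eq (𝒯 : TopTheory V T) {X Y Z : Type u} (φ : T X → Y → V) (ψ : T X → Z → V)
    (𝔷 : T Z) (y : Y) :
    𝒯.extend φ ψ 𝔷 y = ⨅ 𝔛 : T (T X), 𝒯.ihom (𝒯.Txi ψ 𝔛 𝔷) (φ (𝒯.m 𝔛) y) := by
  simp only [extend, 𝒯.ihom_iSup_left]
  refine le_antisymm (le_iInf fun 𝔛 => iInf_le_of_le (𝒯.m 𝔛)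
    (iInf_le_of_le (⟨𝔛, rfl⟩ : {𝔛' : T (T X) // 𝒯.m 𝔛' = 𝒯.m 𝔛}) le_rfl)) ?_
  refine le_iInf fun 𝔵 => le_iInf ?_
  rintro ⟨𝔛, rfl⟩
  exact iInf_le _ 𝔛

variable {X : Type u} {a : 𝒯.TCatStr X} {hs : 𝒯.TCatStr (Hat a)} {y : X → Hat a}

lemma evalRel_isTModRel (hhs : IsHatStr a hs) : 𝒯.IsTModRel a.rel hs.rel (evalRel a) :=
  ⟨fun 𝔵 φ => kleisli_le (fun 𝔛 𝔵' => φ.tens_Txi_le 𝔛 𝔵') 𝔵,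
    fun 𝔵 φ => kleisli_le (fun 𝔛 𝔭 => hhs.tens_Txi_le 𝔛 𝔭 φ) 𝔵⟩

lemma IsColimit.rel_map_eq_of_evalRel (hhs : IsHatStr a hs) (hy : IsYoneda a y)
    {g : Hat a → X} (hg : IsColimit a id (evalRel a) g) (𝔭 : T (Hat a)) (x : X) :
    a.rel (𝒯.map g 𝔭) x = hs.rel 𝔭 (y x) := by
  rw [show a.rel (𝒯.map g 𝔭) x = modStar a g 𝔭 x from rfl, hg, extend_eq, hhs.rel_eq]
  refine iInf_congr fun 𝔷 => ?_
  rw [hy, modStar, congrFun 𝒯.map_id]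
  rfl

lemma exists_sup_of_cocomplete (hhs : IsHatStr a hs) (hy : IsYoneda a y) (sep : Separated a)
    (coc : Cocomplete a) :
    ∃ sup : Hat a → X, IsTFunctor hs a sup ∧ sup ∘ y = id ∧ IsAdjunction hs a sup y := by
  obtain ⟨g, hg, hcol⟩ :=
    coc X (Hat a) a hs id (isTFunctor_id a) (evalRel a) (evalRel_isTModRel hhs)
  have he : ∀ x x', a.rel (𝒯.e (g (y x))) x' = a.rel (𝒯.e x) x' := fun x x' => by
    rw [← 𝒯.e_nat g, hcol.rel_map_eq_of_evalRel hhs hy, ← 𝒯.e_nat y, hhs.rel_map_yoneda hy, hy]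
  have hgy : FunEquiv a (g ∘ y) id := funEquiv_of_unit_le
    (fun x => (a.le_refl x).trans (he x x).ge) (fun x => (a.le_refl (g (y x))).trans (he x _).le)
  have hsupy : g ∘ y = id :=
    sep X a _ _ ((hhs.isTFunctor_yoneda hy).comp hg) (isTFunctor_id a) hgy
  refine ⟨g, hg, hsupy, fun 𝔭 φ => hhs.rel_mono fun 𝔵 => ?_, fun 𝔵 x => (hgy 𝔵 x).le⟩
  rw [hy]
  exact le_rel_sup hhs hy hg (congrFun hsupy) φ 𝔵

variable {A Z : Type u} {as : 𝒯.TCatStr A} {cs : 𝒯.TCatStr Z} {ψ : T A → Z → V}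

lemma IsTModRel.Txi_punit_le (hψ : 𝒯.IsTModRel as.rel cs.rel ψ) (z : Z) (𝔚 : T (T A)) :
    𝒯.Txi (fun 𝔞 (_ : PUnit.{u + 1}) => ψ 𝔞 z) 𝔚 (𝒯.e PUnit.unit) ≤ ψ (𝒯.m 𝔚) z := by
  rw [𝒯.Txi_punit_e ψ z 𝔚]
  calc 𝒯.Txi ψ 𝔚 (𝒯.e z) = 𝒯.tens (𝒯.Txi ψ 𝔚 (𝒯.e z)) 𝒯.unit := (𝒯.tens_unit _).symm
    _ ≤ 𝒯.tens (𝒯.Txi ψ 𝔚 (𝒯.e z)) (cs.rel (𝒯.e z) z) := 𝒯.tens_mono le_rfl (cs.le_refl z)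
    _ ≤ ψ (𝒯.m 𝔚) z := (𝒯.le_kleisli _ _ _ _ _).trans (hψ.2 _ z)

/-- `ψ(-, z) · h^*`, whose supremum is the `ψ`-weighted colimit of `h` at `z`. -/
def weightedPresheaf (h : A → X) (hψ : 𝒯.IsTModRel as.rel cs.rel ψ) (z : Z) : Hat a :=
  ⟨hatMapRel a h (fun 𝔞 => ψ 𝔞 z), isPresheaf_hatMapRel a h _ (hψ.Txi_punit_le z)⟩

lemma Txi_evalRel_map_weightedPresheaf_le (h : A → X) (hψ : 𝒯.IsTModRel as.rel cs.rel ψ)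
    (𝔴 : T (T X)) (𝔷 : T Z) :
    𝒯.Txi (evalRel a) 𝔴 (𝒯.map (weightedPresheaf h hψ) 𝔷) ≤
      ⨆ 𝔅 : {𝔅 : T (T (T X)) // 𝒯.map 𝒯.m 𝔅 = 𝔴}, ⨆ 𝔄 : T (T A),
        𝒯.tens (𝒯.Txi (modCostar a h) (𝒯.m 𝔅.1) (𝒯.m 𝔄)) (𝒯.Txi ψ 𝔄 𝔷) := by
  rw [𝒯.Txi_map_right]
  exact 𝒯.Txi_kleisli_le ψ (modCostar a h) 𝔴 𝔷

lemma isTFunctor_weightedPresheaf (hhs : IsHatStr a hs) (h : A → X)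
    (hψ : 𝒯.IsTModRel as.rel cs.rel ψ) : IsTFunctor cs hs (weightedPresheaf h hψ) := by
  intro 𝔷 z
  refine hhs.le_rel fun 𝔴 => ?_
  refine (𝒯.tens_mono (Txi_evalRel_map_weightedPresheaf_le h hψ 𝔴 𝔷) le_rfl).trans ?_
  rw [iSup_tens]
  refine iSup_le fun ⟨𝔅, h𝔅⟩ => ?_
  rw [iSup_tens]
  refine iSup_le fun 𝔄 => ?_
  rw [𝒯.tens_assoc]
  exact (𝒯.tens_mono le_rfl ((𝒯.le_kleisli _ _ 𝔄 𝔷 z).trans (hψ.2 _ z))).trans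
    (tens_le_hatMapRel a h (fun 𝔞 => ψ 𝔞 z) h𝔅 _)

lemma rel_map_weightedPresheaf (hhs : IsHatStr a hs) (hy : IsYoneda a y) (h : A → X)
    (hψ : 𝒯.IsTModRel as.rel cs.rel ψ) (𝔷 : T Z) (x : X) :
    hs.rel (𝒯.map (weightedPresheaf h hψ) 𝔷) (y x) = 𝒯.extend (modStar a h) ψ 𝔷 x := by
  rw [hhs.rel_eq, extend_eq]
  refine le_antisymm (le_iInf fun 𝔄 => ?_) (le_iInf fun 𝔴 => 𝒯.le_ihom ?_)
  · refine (iInf_le _ (𝒯.map (𝒯.map h) 𝔄)).trans ?_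
    rw [hy, ← 𝒯.m_nat]
    refine 𝒯.ihom_anti ?_
    rw [𝒯.Txi_map_right, 𝒯.Txi_map_left]
    exact 𝒯.Txi_mono (fun 𝔞 z => le_hatMapRel_map a h (fun 𝔞 => ψ 𝔞 z) 𝔞) 𝔄 𝔷
  · rw [hy]
    refine (𝒯.tens_mono (Txi_evalRel_map_weightedPresheaf_le h hψ 𝔴 𝔷) le_rfl).trans ?_
    rw [iSup_tens]
    refine iSup_le ?_
    rintro ⟨𝔅, rfl⟩
    rw [iSup_tens]
    refine iSup_le fun 𝔄 => ?_
    rw [𝒯.tens_assoc, Txi_modCostar, ← 𝒯.m_assoc]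
    refine (𝒯.tens_mono le_rfl ?_).trans (a.tens_Txi_le _ _ x)
    exact (𝒯.tens_mono le_rfl (iInf_le _ 𝔄)).trans (𝒯.tens_ihom_le _ _)

lemma cocomplete_of_sup {sup : Hat a → X} (hhs : IsHatStr a hs) (hy : IsYoneda a y)
    (hsup : IsTFunctor hs a sup) (hadj : IsAdjunction hs a sup y) : Cocomplete a := by
  intro A Z as cs h _ ψ hψ
  refine ⟨sup ∘ weightedPresheaf h hψ, (isTFunctor_weightedPresheaf hhs h hψ).comp hsup,
    fun 𝔷 x => ?_⟩
  change a.rel (𝒯.map (fun z => sup (weightedPresheaf h hψ z)) 𝔷) x = _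
  rw [← map_map, hadj.rel_map_eq hsup (hhs.isTFunctor_yoneda hy)]
  exact rel_map_weightedPresheaf hhs hy h hψ 𝔷 x

end Cocomplete

section Colimit

variable {X Y A Z : Type u}

lemma IsColimit.le {b : 𝒯.TCatStr X} {h : A → X} {ψ : T A → Z → V} {g : Z → X}
    (hcol : IsColimit b h ψ g) (𝔞 : T A) (z : Z) : ψ 𝔞 z ≤ b.rel (𝒯.map h 𝔞) (g z) := by
  have hu : 𝒯.unit ≤ 𝒯.extend (modStar b h) ψ (𝒯.e z) (g z) := by
    rw [← hcol, modStar, 𝒯.e_nat]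
    exact b.le_refl (g z)
  rw [extend_eq] at hu
  have h𝔞 := 𝒯.unit_le_ihom_iff.1 (hu.trans (iInf_le _ (𝒯.e 𝔞)))
  rw [𝒯.m_e] at h𝔞
  exact (𝒯.le_Txi_e ψ 𝔞 z).trans h𝔞

lemma IsColimit.comp_of_isAdjunction {a : 𝒯.TCatStr X} {b : 𝒯.TCatStr Y} {f : X → Y}
    {r : Y → X} (hf : IsTFunctor a b f) (hr : IsTFunctor b a r) (hadj : IsAdjunction a b f r)
    {h : A → X} {ψ : T A → Z → V} {g : Z → X} (hcol : IsColimit a h ψ g) :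
    IsColimit b (f ∘ h) ψ (f ∘ g) := by
  intro 𝔷 y
  rw [modStar, 𝒯.map_comp, hadj.rel_map_eq hf hr]
  refine (hcol 𝔷 (r y)).trans ?_
  rw [extend_eq, extend_eq]
  refine iInf_congr fun 𝔛 => ?_
  rw [modStar, modStar, 𝒯.map_comp, hadj.rel_map_eq hf hr]

lemma IsColimit.unique {b : 𝒯.TCatStr X} (sep : Separated b) {cs : 𝒯.TCatStr Z}
    {h : A → X} {ψ : T A → Z → V} {g g' : Z → X}
    (hg : IsTFunctor cs b g) (hg' : IsTFunctor cs b g')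
    (hcol : IsColimit b h ψ g) (hcol' : IsColimit b h ψ g') : g = g' := by
  have he : ∀ z x, b.rel (𝒯.e (g z)) x = b.rel (𝒯.e (g' z)) x := fun z x => by
    have h₁ := hcol (𝒯.e z) x
    have h₂ := hcol' (𝒯.e z) x
    rw [modStar, 𝒯.e_nat] at h₁ h₂
    rw [h₁, h₂]
  exact sep.eq_of_unit_le hg hg' (fun z => (b.le_refl _).trans (he z _).ge)
    (fun z => (b.le_refl _).trans (he z _).le)

end Colimit

section Homomorphism

variable {X Y : Type u} {a : 𝒯.TCatStr X} {b : 𝒯.TCatStr Y}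
  {hsa : 𝒯.TCatStr (Hat a)} {hsb : 𝒯.TCatStr (Hat b)} {ya : X → Hat a} {yb : Y → Hat b}
  {supX : Hat a → X} {supY : Hat b → Y} {f : X → Y} {fh : Hat a → Hat b}

lemma unit_le_rel_sup_hatMap (hhsa : IsHatStr a hsa) (hhsb : IsHatStr b hsb)
    (hya : IsYoneda a ya) (hyb : IsYoneda b yb)
    (hsupX : IsTFunctor hsa a supX) (hsupyX : ∀ x, supX (ya x) = x)
    (hsupY : IsTFunctor hsb b supY) (hadjY : IsAdjunction hsb b supY yb)
    (hf : IsTFunctor a b f) (hfh : IsHatMap a b f fh) (φ : Hat a) :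
    𝒯.unit ≤ b.rel (𝒯.e (supY (fh φ))) (f (supX φ)) := by
  rw [← 𝒯.e_nat supY, hadjY.rel_map_eq hsupY (hhsb.isTFunctor_yoneda hyb),
    hhsb.unit_le_rel_e_iff]
  intro 𝔶
  rw [hfh]
  refine hatMapRel_le (yb (f (supX φ))) (fun 𝔵 => ?_) 𝔶
  rw [hyb]
  exact (le_rel_sup hhsa hya hsupX hsupyX φ 𝔵).trans (hf 𝔵 _)

lemma IsLeftAdjoint.unit_le_rel_hatMap_sup (hhsa : IsHatStr a hsa) (hhsb : IsHatStr b hsb)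
    (hya : IsYoneda a ya) (hyb : IsYoneda b yb)
    (hsupX : IsTFunctor hsa a supX) (hadjX : IsAdjunction hsa a supX ya)
    (hsupY : IsTFunctor hsb b supY) (hsupyY : ∀ y, supY (yb y) = y)
    (hfh : IsHatMap a b f fh) (hla : IsLeftAdjoint a b f) (φ : Hat a) :
    𝒯.unit ≤ b.rel (𝒯.e (f (supX φ))) (supY (fh φ)) := by
  obtain ⟨hf, r, hr, hadj⟩ := hla
  rw [← 𝒯.e_nat f, hadj.rel_map_eq hf hr, ← 𝒯.e_nat supX,
    hadjX.rel_map_eq hsupX (hhsa.isTFunctor_yoneda hya), hhsa.unit_le_rel_e_iff]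
  intro 𝔵
  rw [hya, ← hadj.rel_map_eq hf hr]
  refine (le_hatMapRel_map b f φ.1 𝔵).trans ?_
  rw [← hfh]
  exact le_rel_sup hhsb hyb hsupY hsupyY (fh φ) _

lemma IsLeftAdjoint.comp_sup (sepb : Separated b) (hhsa : IsHatStr a hsa)
    (hhsb : IsHatStr b hsb) (hya : IsYoneda a ya) (hyb : IsYoneda b yb)
    (hsupX : IsTFunctor hsa a supX) (hadjX : IsAdjunction hsa a supX ya)
    (hsupyX : ∀ x, supX (ya x) = x)
    (hsupY : IsTFunctor hsb b supY) (hadjY : IsAdjunction hsb b supY yb)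
    (hsupyY : ∀ y, supY (yb y) = y)
    (hfh : IsHatMap a b f fh) (hla : IsLeftAdjoint a b f) : f ∘ supX = supY ∘ fh :=
  sepb.eq_of_unit_le (hsupX.comp hla.1) ((hfh.isTFunctor hhsa hhsb).comp hsupY)
    (hla.unit_le_rel_hatMap_sup hhsa hhsb hya hyb hsupX hadjX hsupY hsupyY hfh)
    (unit_le_rel_sup_hatMap hhsa hhsb hya hyb hsupX hsupyX hsupY hadjY hla.1 hfh)

lemma isLeftAdjoint_of_comp_sup (hhsa : IsHatStr a hsa) (hhsb : IsHatStr b hsb)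
    (hya : IsYoneda a ya) (hyb : IsYoneda b yb)
    (hsupX : IsTFunctor hsa a supX) (hadjX : IsAdjunction hsa a supX ya)
    (hsupyX : ∀ x, supX (ya x) = x)
    (hsupY : IsTFunctor hsb b supY) (hadjY : IsAdjunction hsb b supY yb)
    (hsupyY : ∀ y, supY (yb y) = y)
    (hf : IsTFunctor a b f) (hfh : IsHatMap a b f fh) (hcomm : f ∘ supX = supY ∘ fh) :
    IsLeftAdjoint a b f := by
  refine ⟨hf, fun y => supX (invMap hf (yb y)),
    ((hhsb.isTFunctor_yoneda hyb).comp (isTFunctor_invMap hhsa hhsb hf)).comp hsupX,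
    fun 𝔵 x => whisker a ?_ 𝔵, fun 𝔶 y => whisker b ?_ 𝔶⟩
  · have h := unit_le_rel_sup_sup hhsa hya hsupX hadjX hsupyX
      (χ₁ := ya x) (χ₂ := invMap hf (yb (f x))) fun 𝔵 => by
        rw [hya]
        change _ ≤ (yb (f x)).1 _
        rw [hyb]
        exact hf 𝔵 x
    rwa [hsupyX] at h
  · have h := unit_le_rel_sup_sup hhsb hyb hsupY hadjY hsupyY
      (χ₁ := fh (invMap hf (yb y))) (χ₂ := yb y) fun 𝔶 => by
        rw [hfh]
        exact hatMapRel_le (yb y) (fun _ => le_rfl) 𝔶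
    rwa [hsupyY, ← Function.comp_apply (f := supY), ← hcomm] at h

end Homomorphism

section Restriction

variable {W X : Type u}

lemma Txi_modStar (c : 𝒯.TCatStr X) (k : W → X) (𝔚 : T (T W)) (𝔵 : T X) :
    𝒯.Txi (modStar c k) 𝔚 𝔵 = 𝒯.Txi c.rel (𝒯.map (𝒯.map k) 𝔚) 𝔵 :=
  (𝒯.Txi_map_left c.rel (𝒯.map k) 𝔚 𝔵).symm

lemma Txi_modStar_e_le (c : 𝒯.TCatStr X) (k : W → X) (𝔚 : T (T W)) (x : X) :
    𝒯.Txi (modStar c k) 𝔚 (𝒯.e x) ≤ modStar c k (𝒯.m 𝔚) x := by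
  rw [modStar, 𝒯.m_nat, Txi_modStar]
  exact c.Txi_e_le _ x

lemma IsTFunctor.isTModRel_modStar {aw : 𝒯.TCatStr W} {c : 𝒯.TCatStr X} {k : W → X}
    (hk : IsTFunctor aw c k) : 𝒯.IsTModRel aw.rel c.rel (modStar c k) := by
  refine ⟨fun 𝔴 x => kleisli_le (w := fun 𝔴 => modStar c k 𝔴 x) (fun 𝔚 𝔴' => ?_) 𝔴,
    fun 𝔴 x => kleisli_le (w := fun 𝔴 => modStar c k 𝔴 x) (fun 𝔚 𝔶 => ?_) 𝔴⟩
  · refine (𝒯.tens_mono (𝒯.Txi_le_Txi_map (fun 𝔴₀ w => hk 𝔴₀ w) 𝔚 𝔴') le_rfl).trans ?_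
    change _ ≤ c.rel (𝒯.map k (𝒯.m 𝔚)) x
    rw [𝒯.m_nat]
    exact c.tens_Txi_le _ _ x
  · change _ ≤ c.rel (𝒯.map k (𝒯.m 𝔚)) x
    rw [𝒯.m_nat, Txi_modStar]
    exact c.tens_Txi_le _ 𝔶 x

lemma unit_le_extend_modStar (c : 𝒯.TCatStr X) (k : W → X) (x : X) :
    𝒯.unit ≤ 𝒯.extend (modStar c k) (modStar c k) (𝒯.e x) x := by
  rw [extend_eq]
  exact le_iInf fun 𝔚 => 𝒯.unit_le_ihom_iff.2 (Txi_modStar_e_le c k 𝔚 x)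

end Restriction

section Product

variable {J : Type u} {F : J → Type u}

def prodStr (S : ∀ j, 𝒯.TCatStr (F j)) : 𝒯.TCatStr (∀ j, F j) where
  rel 𝔵 x := ⨅ j, (S j).rel (𝒯.map (fun p => p j) 𝔵) (x j)
  le_refl x := le_iInf fun j => by
    rw [𝒯.e_nat]
    exact (S j).le_refl (x j)
  comp 𝔵 x := kleisli_le (w := fun 𝔵 => ⨅ j, (S j).rel (𝒯.map (fun p => p j) 𝔵) (x j))
    (fun 𝔛 𝔶 => le_iInf fun j => by
      have hTxi := 𝒯.Txi_le_Txi_map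
        (r := fun 𝔵 x => ⨅ j, (S j).rel (𝒯.map (fun p => p j) 𝔵) (x j)) (s := (S j).rel)
        (f := 𝒯.map (fun p => p j)) (g := fun p => p j) (fun _ _ => iInf_le _ j) 𝔛 𝔶
      refine (𝒯.tens_mono hTxi (iInf_le _ j)).trans ?_
      rw [𝒯.m_nat]
      exact (S j).tens_Txi_le _ _ _) 𝔵

variable {S : ∀ j, 𝒯.TCatStr (F j)}

lemma isTFunctor_prodStr_apply (S : ∀ j, 𝒯.TCatStr (F j)) (j : J) :
    IsTFunctor (prodStr S) (S j) (fun p => p j) :=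
  fun _ _ => iInf_le _ j

lemma isTFunctor_prodStr_pi {Z : Type u} {c : 𝒯.TCatStr Z} {g : ∀ j, Z → F j}
    (hg : ∀ j, IsTFunctor c (S j) (g j)) : IsTFunctor c (prodStr S) (fun z j => g j z) :=
  fun 𝔷 z => le_iInf fun j => by
    rw [map_map]
    exact hg j 𝔷 z

lemma unit_le_prodStr_e_iff (x x' : ∀ j, F j) :
    𝒯.unit ≤ (prodStr S).rel (𝒯.e x) x' ↔ ∀ j, 𝒯.unit ≤ (S j).rel (𝒯.e (x j)) (x' j) := by
  simp only [prodStr, 𝒯.e_nat, le_iInf_iff]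

lemma Separated.prodStr (hS : ∀ j, Separated (S j)) : Separated (prodStr S) := by
  intro A as p q hp hq hpq
  funext v j
  have hj : (fun v => p v j) = fun v => q v j :=
    (hS j).eq_of_unit_le (hp.comp (isTFunctor_prodStr_apply S j))
      (hq.comp (isTFunctor_prodStr_apply S j))
      (fun v => (unit_le_prodStr_e_iff _ _).1 (hpq.unit_le v) j)
      (fun v => (unit_le_prodStr_e_iff _ _).1 (hpq.symm.unit_le v) j)
  exact congrFun hj v

lemma Cocomplete.prodStr (hS : ∀ j, Cocomplete (S j)) : Cocomplete (prodStr S) := by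
  intro A Z as cs h hh ψ hψ
  choose g hg hcol using fun j =>
    hS j A Z as cs (fun v => h v j) (hh.comp (isTFunctor_prodStr_apply S j)) ψ hψ
  refine ⟨fun z j => g j z, isTFunctor_prodStr_pi hg, fun 𝔷 x => ?_⟩
  have hcolj : ∀ j, (S j).rel (𝒯.map (g j) 𝔷) (x j) =
      ⨅ 𝔄, 𝒯.ihom (𝒯.Txi ψ 𝔄 𝔷) ((S j).rel (𝒯.map (fun v => h v j) (𝒯.m 𝔄)) (x j)) :=
    fun j => (hcol j 𝔷 (x j)).trans (extend_eq 𝒯 _ ψ 𝔷 (x j))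
  change ⨅ j, (S j).rel (𝒯.map (fun p => p j) (𝒯.map (fun z j => g j z) 𝔷)) (x j) = _
  rw [extend_eq]
  simp only [map_map, hcolj]
  rw [iInf_comm]
  refine iInf_congr fun 𝔄 => ?_
  change _ = 𝒯.ihom _ (⨅ j, (S j).rel (𝒯.map (fun p => p j) (𝒯.map h (𝒯.m 𝔄))) (x j))
  simp only [map_map, 𝒯.ihom_iInf]

lemma isLeftAdjoint_prodStr_apply (hS : ∀ j, Cocomplete (S j)) (j : J) :
    IsLeftAdjoint (prodStr S) (S j) (fun p => p j) := by
  choose g hg hcol using fun k => hS k _ _ (prodStr S) (S j) (fun p => p k)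
    (isTFunctor_prodStr_apply S k) _ (isTFunctor_prodStr_apply S j).isTModRel_modStar
  refine ⟨isTFunctor_prodStr_apply S j, fun y k => g k y, isTFunctor_prodStr_pi hg,
    fun 𝔵 x => whisker _ ?_ 𝔵, fun 𝔶 y => whisker _ ?_ 𝔶⟩
  · refine (unit_le_prodStr_e_iff _ _).2 fun k => ?_
    have hk := (hcol k).le (𝒯.e x) (x j)
    rw [modStar, 𝒯.e_nat, 𝒯.e_nat] at hk
    exact ((S j).le_refl _).trans hk
  · have hj := hcol j (𝒯.e y) y
    rw [modStar, 𝒯.e_nat] at hj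
    change 𝒯.unit ≤ (S j).rel (𝒯.e (g j y)) y
    rw [hj]
    exact unit_le_extend_modStar (S j) (fun p : ∀ k, F k => p j) y

lemma isLeftAdjoint_prodStr_pi {W : Type u} {aw : 𝒯.TCatStr W} (hW : Cocomplete aw)
    {p : ∀ j, W → F j} (hp : ∀ j, IsLeftAdjoint aw (S j) (p j)) :
    IsLeftAdjoint aw (prodStr S) (fun w j => p j w) := by
  have hpf : IsTFunctor aw (prodStr S) (fun w j => p j w) :=
    isTFunctor_prodStr_pi fun j => (hp j).1
  obtain ⟨v, hv, hcol⟩ := hW W _ aw (prodStr S) id (isTFunctor_id aw) _ hpf.isTModRel_modStar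
  refine ⟨hpf, v, hv, fun 𝔴 w => whisker aw ?_ 𝔴, fun 𝔵 x => whisker _ ?_ 𝔵⟩
  · have hw := hcol.le (𝒯.e w) (fun j => p j w)
    rw [modStar, 𝒯.e_nat, 𝒯.e_nat] at hw
    exact ((prodStr S).le_refl _).trans hw
  · refine (unit_le_prodStr_e_iff _ _).2 fun j => ?_
    obtain ⟨hpj, r, hr, hadj⟩ := hp j
    have hj := hcol.comp_of_isAdjunction hpj hr hadj (𝒯.e x) (x j)
    rw [modStar, 𝒯.e_nat] at hj
    change 𝒯.unit ≤ (S j).rel (𝒯.e ((p j ∘ v) x)) (x j)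
    rw [hj, extend_eq]
    refine le_iInf fun 𝔚 => 𝒯.unit_le_ihom_iff.2 ?_
    have hle : 𝒯.Txi (modStar (prodStr S) (fun w j => p j w)) 𝔚 (𝒯.e x) ≤
        𝒯.Txi (modStar (S j) (p j)) 𝔚 (𝒯.map (fun x => x j) (𝒯.e x)) := by
      rw [𝒯.Txi_map_right]
      refine 𝒯.Txi_mono (fun 𝔴 x' => (iInf_le _ j).trans_eq ?_) 𝔚 (𝒯.e x)
      rw [map_map]
      rfl
    rw [𝒯.e_nat] at hle
    exact hle.trans (Txi_modStar_e_le (S j) (p j) 𝔚 (x j))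

end Product

section Equalizer

variable {A W X Y Z : Type u}

lemma isTFunctor_pullbackStr (a : 𝒯.TCatStr X) (f : W → X) :
    IsTFunctor (pullbackStr a f) a f :=
  fun _ _ => le_rfl

lemma isTFunctor_pullbackStr_iff {as : 𝒯.TCatStr A} {a : 𝒯.TCatStr X} {f : W → X}
    {g : A → W} : IsTFunctor as (pullbackStr a f) g ↔ IsTFunctor as a (f ∘ g) := by
  simp only [IsTFunctor, pullbackStr, 𝒯.map_comp]
  rfl

lemma Separated.pullbackStr {a : 𝒯.TCatStr X} (sep : Separated a) {f : W → X}
    (hf : Function.Injective f) : Separated (TopTheory.pullbackStr a f) := by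
  intro A as p q hp hq hpq
  have he : ∀ {p' q' : A → W}, FunEquiv (TopTheory.pullbackStr a f) p' q' →
      ∀ v, 𝒯.unit ≤ a.rel (𝒯.e (f (p' v))) (f (q' v)) := fun hpq' v => by
    have h := hpq'.unit_le v
    change 𝒯.unit ≤ a.rel (𝒯.map f (𝒯.e _)) _ at h
    rwa [𝒯.e_nat] at h
  have hfpq : f ∘ p = f ∘ q :=
    sep.eq_of_unit_le (isTFunctor_pullbackStr_iff.1 hp) (isTFunctor_pullbackStr_iff.1 hq)
      (he hpq) (he hpq.symm)
  exact funext fun v => hf (congrFun hfpq v)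

lemma IsColimit.pullbackStr {a : 𝒯.TCatStr X} {f : W → X} {h : A → W} {ψ : T A → Z → V}
    {g : Z → W} (hcol : IsColimit a (f ∘ h) ψ (f ∘ g)) :
    IsColimit (TopTheory.pullbackStr a f) h ψ g := by
  intro 𝔷 x
  have hx := hcol 𝔷 (f x)
  rw [extend_eq] at hx ⊢
  simp only [modStar, 𝒯.map_comp] at hx ⊢
  exact hx

/-- `f₁` and `f₂` both preserve the colimit computed in `X`, so they agree on it. -/
lemma exists_colimit_equalizer {a : 𝒯.TCatStr X} {b : 𝒯.TCatStr Y} {f₁ f₂ : X → Y}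
    (sepb : Separated b) (coca : Cocomplete a)
    (hf₁ : IsLeftAdjoint a b f₁) (hf₂ : IsLeftAdjoint a b f₂)
    {as : 𝒯.TCatStr A} {cs : 𝒯.TCatStr Z} {h : A → {x // f₁ x = f₂ x}}
    (hh : IsTFunctor as a (Subtype.val ∘ h)) {ψ : T A → Z → V}
    (hψ : 𝒯.IsTModRel as.rel cs.rel ψ) :
    ∃ g : Z → {x // f₁ x = f₂ x},
      IsTFunctor cs a (Subtype.val ∘ g) ∧ IsColimit a (Subtype.val ∘ h) ψ (Subtype.val ∘ g) := by
  obtain ⟨g, hg, hcol⟩ := coca A Z as cs _ hh ψ hψ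
  obtain ⟨hf₁, r₁, hr₁, hadj₁⟩ := hf₁
  obtain ⟨hf₂, r₂, hr₂, hadj₂⟩ := hf₂
  have hcol₂ := hcol.comp_of_isAdjunction hf₂ hr₂ hadj₂
  rw [show f₂ ∘ Subtype.val ∘ h = f₁ ∘ Subtype.val ∘ h from funext fun v => (h v).2.symm]
    at hcol₂
  have hfg : f₁ ∘ g = f₂ ∘ g := (hcol.comp_of_isAdjunction hf₁ hr₁ hadj₁).unique sepb
    (hg.comp hf₁) (hg.comp hf₂) hcol₂
  exact ⟨fun z => ⟨g z, congrFun hfg z⟩, hg, hcol⟩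

lemma isLeftAdjoint_subtype_val {a : 𝒯.TCatStr X} {b : 𝒯.TCatStr Y} {f₁ f₂ : X → Y}
    (sepb : Separated b) (coca : Cocomplete a)
    (hf₁ : IsLeftAdjoint a b f₁) (hf₂ : IsLeftAdjoint a b f₂) :
    IsLeftAdjoint (pullbackStr a (Subtype.val : {x // f₁ x = f₂ x} → X)) a Subtype.val := by
  have hval := isTFunctor_pullbackStr a (Subtype.val : {x // f₁ x = f₂ x} → X)
  obtain ⟨ρ, hρ, hcol⟩ :=
    exists_colimit_equalizer sepb coca hf₁ hf₂ (h := id) hval hval.isTModRel_modStar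
  refine ⟨hval, ρ, isTFunctor_pullbackStr_iff.2 hρ, fun 𝔢 w => whisker _ ?_ 𝔢,
    fun 𝔵 x => whisker a ?_ 𝔵⟩
  · have hw := hcol.le (𝒯.e w) w.1
    rw [modStar, 𝒯.e_nat, 𝒯.e_nat] at hw
    change 𝒯.unit ≤ a.rel (𝒯.map Subtype.val (𝒯.e w)) (ρ w.1).1
    rw [𝒯.e_nat]
    exact (a.le_refl _).trans hw
  · have hx := hcol (𝒯.e x) x
    rw [modStar, 𝒯.e_nat] at hx
    change 𝒯.unit ≤ a.rel (𝒯.e ((Subtype.val ∘ ρ) x)) x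
    rw [hx]
    exact unit_le_extend_modStar a Subtype.val x

lemma IsLeftAdjoint.codRestrict {aw : 𝒯.TCatStr W} {a : 𝒯.TCatStr X} {P : X → Prop}
    {k : W → X} (hk : IsLeftAdjoint aw a k) (hP : ∀ w, P (k w)) :
    IsLeftAdjoint aw (pullbackStr a (Subtype.val : {x // P x} → X)) (fun w => ⟨k w, hP w⟩) := by
  obtain ⟨hk, r, hr, hadj⟩ := hk
  exact ⟨isTFunctor_pullbackStr_iff.2 hk, fun x => r x.1,
    (isTFunctor_pullbackStr a Subtype.val).comp hr, hadj.1, fun _ x => hadj.2 _ x.1⟩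

end Equalizer

section Limits

open CategoryTheory Limits

def CocomplSep.pi {J : Type u} (F : J → CocomplSep 𝒯) : CocomplSep 𝒯 where
  carrier := ∀ j, (F j).carrier
  str := prodStr fun j => (F j).str
  sep := Separated.prodStr fun j => (F j).sep
  coc := Cocomplete.prodStr fun j => (F j).coc

def CocomplSep.equalizer {A B : CocomplSep 𝒯} (f g : A ⟶ B) : CocomplSep 𝒯 where
  carrier := {x // f.1 x = g.1 x}
  str := pullbackStr A.str Subtype.val
  sep := A.sep.pullbackStr Subtype.val_injective
  coc A' Z as cs h hh ψ hψ := by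
    obtain ⟨g', hg', hcol⟩ :=
      exists_colimit_equalizer B.sep A.coc f.2 g.2 (isTFunctor_pullbackStr_iff.1 hh) hψ
    exact ⟨g', isTFunctor_pullbackStr_iff.2 hg', hcol.pullbackStr⟩

def CocomplSep.piFan {J : Type u} (F : J → CocomplSep 𝒯) : Fan F :=
  Fan.mk (CocomplSep.pi F) fun j =>
    ⟨fun p => p j, isLeftAdjoint_prodStr_apply (fun k => (F k).coc) j⟩

def CocomplSep.isLimitPiFan {J : Type u} (F : J → CocomplSep 𝒯) :
    IsLimit (CocomplSep.piFan F) :=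
  Fan.IsLimit.mk _
    (fun s => ⟨fun w j => (s.proj j).1 w, isLeftAdjoint_prodStr_pi s.pt.coc fun j => (s.proj j).2⟩)
    (fun _ _ => rfl)
    (fun _ _ hm => Subtype.ext (funext fun w => funext fun j =>
      congrFun (congrArg Subtype.val (hm j)) w))

def CocomplSep.equalizerFork {A B : CocomplSep 𝒯} (f g : A ⟶ B) : Fork f g :=
  Fork.ofι (P := CocomplSep.equalizer f g)
    ⟨Subtype.val, isLeftAdjoint_subtype_val B.sep A.coc f.2 g.2⟩
    (Subtype.ext (funext fun e : {x // f.1 x = g.1 x} => e.2))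

def CocomplSep.isLimitEqualizerFork {A B : CocomplSep 𝒯} (f g : A ⟶ B) :
    IsLimit (CocomplSep.equalizerFork f g) :=
  Fork.IsLimit.mk _
    (fun s => ⟨fun w => ⟨s.ι.1 w, congrFun (congrArg Subtype.val s.condition) w⟩,
      s.ι.2.codRestrict _⟩)
    (fun _ => rfl)
    (fun _ _ hm => Subtype.ext (funext fun w => Subtype.ext (congrFun (congrArg Subtype.val hm) w)))

instance : HasProducts.{u} (CocomplSep 𝒯) := fun _ =>
  { has_limit := fun F =>
      have : HasLimit (Discrete.functor (F.obj ∘ Discrete.mk)) :=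
        HasLimit.mk ⟨_, CocomplSep.isLimitPiFan _⟩
      hasLimit_of_iso Discrete.natIsoFunctor.symm }

instance : HasEqualizers (CocomplSep 𝒯) :=
  { has_limit := fun F =>
      have : HasLimit (parallelPair (F.map WalkingParallelPairHom.left)
          (F.map WalkingParallelPairHom.right)) :=
        HasLimit.mk ⟨_, CocomplSep.isLimitEqualizerFork _ _⟩
      hasLimit_of_iso (diagramIsoParallelPair F).symm }

theorem hasLimitsOfSize_cocomplSep : HasLimitsOfSize.{u, u} (CocomplSep 𝒯) :=
  has_limits_of_hasEqualizers_and_products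

end Limits

/-- Subsection "Cocomplete 𝒯-categories as Eilenberg–Moore algebras".
On `Cat_sep 𝒯`, the presheaf construction `X ↦ X̂` with the Yoneda functors as unit
and `μ_X = y_X⁻¹` as multiplication defines a 2-monad `𝕀` of Kock–Zöberlein type
(`ŷ_X ≤ y_{X̂}`); its Eilenberg–Moore algebras correspond exactly to the L-separated
cocomplete `𝒯`-categories (structure maps `Sup_X ⊣ y_X` with `Sup_X · y_X = 1`), with
homomorphisms the left adjoint `𝒯`-functors, so the Eilenberg–Moore category is
equivalent to `Cocompl_sep 𝒯`. In particular, `Cocompl_sep 𝒯` is complete. -/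
theorem statement6 (𝒯 : TopTheory V T) :
    -- the presheaf construction takes values in separated 𝒯-categories
    (∀ (X : Type u) (a : 𝒯.TCatStr X) (hs : 𝒯.TCatStr (Hat a)),
       Separated a → IsHatStr a hs → Separated hs) ∧
    -- unit (Yoneda) is natural and `(·)̂` is a 2-functor on left adjoints
    (∀ (X Y : Type u) (a : 𝒯.TCatStr X) (b : 𝒯.TCatStr Y)
       (hsa : 𝒯.TCatStr (Hat a)) (hsb : 𝒯.TCatStr (Hat b))
       (ya : X → Hat a) (yb : Y → Hat b) (f g : X → Y) (fh gh : Hat a → Hat b),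
       Separated a → Separated b → IsHatStr a hsa → IsHatStr b hsb →
       IsYoneda a ya → IsYoneda b yb → IsTFunctor a hsa ya → IsTFunctor b hsb yb →
       IsTFunctor a b f → IsTFunctor a b g → IsHatMap a b f fh → IsHatMap a b g gh →
       (IsLeftAdjoint hsa hsb fh ∧ fh ∘ ya = yb ∘ f ∧
         (funLE b f g → funLE hsb fh gh))) ∧
    -- Kock–Zöberlein property: `ŷ_X ≤ y_{X̂}`
    (∀ (X : Type u) (a : 𝒯.TCatStr X) (hs : 𝒯.TCatStr (Hat a))
       (hs2 : 𝒯.TCatStr (Hat hs)) (y : X → Hat a) (y' : Hat a → Hat hs)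
       (yh : Hat a → Hat hs),
       Separated a → IsHatStr a hs → IsHatStr hs hs2 →
       IsYoneda a y → IsTFunctor a hs y → IsYoneda hs y' → IsTFunctor hs hs2 y' →
       IsHatMap a hs y yh → funLE hs2 yh y') ∧
    -- the monad unit laws for `μ_X = y_X⁻¹`
    (∀ (X : Type u) (a : 𝒯.TCatStr X) (hs : 𝒯.TCatStr (Hat a))
       (hs2 : 𝒯.TCatStr (Hat hs)) (y : X → Hat a) (y' : Hat a → Hat hs)
       (yh : Hat a → Hat hs) (μ : Hat hs → Hat a),
       Separated a → IsHatStr a hs → IsHatStr hs hs2 →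
       IsYoneda a y → IsTFunctor a hs y → IsYoneda hs y' → IsTFunctor hs hs2 y' →
       IsHatMap a hs y yh →
       (∀ (Ψ : Hat hs) (𝔵 : T X), (μ Ψ).1 𝔵 = Ψ.1 (𝒯.map y 𝔵)) →
       (∀ Ψ : Hat a, μ (y' Ψ) = Ψ) ∧ (∀ ψ : Hat a, μ (yh ψ) = ψ)) ∧
    -- Eilenberg–Moore algebra structures (`Sup ⊣ y`, `Sup · y = 1`) exist exactly on
    -- the cocomplete separated 𝒯-categories
    (∀ (X : Type u) (a : 𝒯.TCatStr X) (hs : 𝒯.TCatStr (Hat a)) (y : X → Hat a),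
       Separated a → IsHatStr a hs → IsYoneda a y → IsTFunctor a hs y →
       ((∃ h : Hat a → X, IsTFunctor hs a h ∧ h ∘ y = id ∧ IsAdjunction hs a h y) ↔
         Cocomplete a)) ∧
    -- homomorphisms of algebras are exactly the left adjoint 𝒯-functors
    (∀ (X Y : Type u) (a : 𝒯.TCatStr X) (b : 𝒯.TCatStr Y)
       (hsa : 𝒯.TCatStr (Hat a)) (hsb : 𝒯.TCatStr (Hat b))
       (ya : X → Hat a) (yb : Y → Hat b)
       (SupX : Hat a → X) (SupY : Hat b → Y) (f : X → Y) (fh : Hat a → Hat b),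
       Separated a → Separated b → Cocomplete a → Cocomplete b →
       IsHatStr a hsa → IsHatStr b hsb → IsYoneda a ya → IsYoneda b yb →
       IsTFunctor a hsa ya → IsTFunctor b hsb yb →
       IsTFunctor hsa a SupX → IsAdjunction hsa a SupX ya → SupX ∘ ya = id →
       IsTFunctor hsb b SupY → IsAdjunction hsb b SupY yb → SupY ∘ yb = id →
       IsTFunctor a b f → IsHatMap a b f fh →
       (IsLeftAdjoint a b f ↔ f ∘ SupX = SupY ∘ fh)) ∧
    -- in particular, `Cocompl_sep 𝒯` is complete
    CategoryTheory.Limits.HasLimitsOfSize.{u, u} (CocomplSep 𝒯) := by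
  refine ⟨fun X a hs _ hhs => hhs.separated, ?_, ?_, ?_, ?_, ?_, hasLimitsOfSize_cocomplSep⟩
  · intro X Y a b hsa hsb ya yb f g fh gh _ _ hhsa hhsb hya hyb _ _ hf _ hfh hgh
    exact ⟨hfh.isLeftAdjoint hhsa hhsb hf, hfh.comp_yoneda hya hyb hf, hfh.funLE hhsb hgh⟩
  · intro X a hs hs₂ y y₂ yh _ hhs hhs₂ hy _ hy₂ _ hyh
    exact funLE_hatMap_yoneda hhs hhs₂ hy hy₂ hyh
  · intro X a hs hs₂ y y₂ yh μ _ hhs _ hy _ hy₂ _ hyh hμ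
    refine ⟨fun Ψ => Subtype.ext (funext fun 𝔵 => ?_), fun ψ => Subtype.ext (funext fun 𝔵 => ?_)⟩
    · rw [hμ, hy₂, hhs.rel_map_yoneda hy]
    · rw [hμ, hyh, hatMapRel_yoneda_map hhs hy]
  · intro X a hs y sep hhs hy _
    exact ⟨fun ⟨_, hsup, _, hadj⟩ => cocomplete_of_sup hhs hy hsup hadj,
      exists_sup_of_cocomplete hhs hy sep⟩
  · intro X Y a b hsa hsb ya yb supX supY f fh _ sepb _ _ hhsa hhsb hya hyb _ _
      hsupX hadjX hsupyX hsupY hadjY hsupyY hf hfh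
    exact ⟨fun hla => hla.comp_sup sepb hhsa hhsb hya hyb hsupX hadjX (congrFun hsupyX) hsupY
        hadjY (congrFun hsupyY) hfh,
      isLeftAdjoint_of_comp_sup hhsa hhsb hya hyb hsupX hadjX (congrFun hsupyX) hsupY hadjY
        (congrFun hsupyY) hf hfh⟩

end TopTheory

end Paper
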